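/- arXiv:0806.0877 — 5 statements merged into one kernel-verified Lean document; each statement's English description precedes it below -/
import Mathlib

section
/- For every sign ε ∈ {1,-1} and all indices 1 ≤ j < k < l ≤ n, the identity s_{j,k} s_{k,l}^ε = {s_{k,l}^ε, s_{j,l} s_{k,l}} s_{j,k} holds in the braid group B_n, where {a,b} = b^{-1}ab. -/
/-- Defining relations of the braid group `B n` on generators `σ_1, …, σ_{n-1}`;
the generator index `i : Fin (n-1)` stands for the Artin generator `σ_{i+1}`. -/
def braidRels (n : ℕ) : Set (FreeGroup (Fin (n - 1))) :=
  {r | ∃ i j : Fin (n - 1),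
        ((i : ℕ) + 1 = (j : ℕ) ∧
          r = (FreeGroup.of j * FreeGroup.of i * FreeGroup.of j) *
              (FreeGroup.of i * FreeGroup.of j * FreeGroup.of i)⁻¹) ∨
        ((i : ℕ) + 1 < (j : ℕ) ∧
          r = (FreeGroup.of i * FreeGroup.of j) * (FreeGroup.of j * FreeGroup.of i)⁻¹)}

/-- The braid group on `n` strands. -/
abbrev BraidGroup (n : ℕ) := PresentedGroup (braidRels n)

/-- `braidSigma n k` is the Artin generator `σ_k` of `B_n`, for `1 ≤ k ≤ n-1`
(junk value `1` outside this range). -/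
def braidSigma (n k : ℕ) : BraidGroup n :=
  if h : k - 1 < n - 1 then PresentedGroup.of ⟨k - 1, h⟩ else 1

/-- The Artin–Burau generator `s_{i,j}` of `B_n`, for `1 ≤ i < j ≤ n`:
`s_{i,i+1} = σ_i ^ 2` and
`s_{i,j} = (σ_{j-1} σ_{j-2} ⋯ σ_{i+1}) σ_i ^ 2 (σ_{j-1} σ_{j-2} ⋯ σ_{i+1})⁻¹`. -/
def braidS (n i j : ℕ) : BraidGroup n :=
  (((List.range' (i + 1) (j - i - 1)).reverse.map (braidSigma n)).prod) *
    braidSigma n i ^ 2 *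
    (((List.range' (i + 1) (j - i - 1)).reverse.map (braidSigma n)).prod)⁻¹

/-- The conjugation notation `{a, b} = b⁻¹ * a * b` of the paper. -/
def braidConj {n : ℕ} (a b : BraidGroup n) : BraidGroup n := b⁻¹ * a * b

section GenericGroup
variable {G : Type*} [Group G] (a b s : G)

theorem braid_aux1 (h : a * b * a = b * a * b) : b * a⁻¹ * b⁻¹ = a⁻¹ * b⁻¹ * a := by
  have h' : a⁻¹ * (b⁻¹ * a⁻¹) = b⁻¹ * (a⁻¹ * b⁻¹) := by
    simpa [mul_inv_rev, mul_assoc] using congrArg Inv.inv h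
  calc b * a⁻¹ * b⁻¹ = b * (a⁻¹ * (b⁻¹ * a⁻¹)) * a := by group
    _ = b * (b⁻¹ * (a⁻¹ * b⁻¹)) * a := by rw [h']
    _ = a⁻¹ * b⁻¹ * a := by group

theorem braid_aux_mid (h : a * b * a = b * a * b) (hbs : b * s = s * b) :
    Commute a (b * (a * s * a⁻¹) * b⁻¹) := by
  show _ = _
  calc a * (b * (a * s * a⁻¹) * b⁻¹) = (a * b * a) * s * (a⁻¹ * b⁻¹) := by group
    _ = (b * a * b) * s * (a⁻¹ * b⁻¹) := by rw [h]
    _ = (b * a) * (b * s) * (a⁻¹ * b⁻¹) := by group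
    _ = (b * a) * (s * b) * (a⁻¹ * b⁻¹) := by rw [hbs]
    _ = b * a * s * (b * a⁻¹ * b⁻¹) := by group
    _ = b * a * s * (a⁻¹ * b⁻¹ * a) := by rw [braid_aux1 a b h]
    _ = (b * (a * s * a⁻¹) * b⁻¹) * a := by group

theorem braid_aux_delta (h : a * b * a = b * a * b) :
    Commute (b ^ 2) ((b * a ^ 2 * b⁻¹) * b ^ 2 * a ^ 2) := by
  have hub : (b * a * b) * b = a * (b * a * b) := by
    rw [show a * (b * a * b) = (a * b * a) * b from by group, h]
  have hua : (b * a * b) * a = b * (b * a * b) := by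
    rw [show (b * a * b) * a = b * (a * b * a) from by group, h]
  have hcomm : Commute b ((b * a * b) * (b * a * b)) := by
    show _ = _
    calc b * ((b * a * b) * (b * a * b)) = (b * (b * a * b)) * (b * a * b) := by group
      _ = ((b * a * b) * a) * (b * a * b) := by rw [hua]
      _ = (b * a * b) * (a * (b * a * b)) := by group
      _ = (b * a * b) * ((b * a * b) * b) := by rw [hub]
      _ = ((b * a * b) * (b * a * b)) * b := by group
  have hE : (b * a ^ 2 * b⁻¹) * b ^ 2 * a ^ 2 = (b * a * b) * (b * a * b) := by
    calc (b * a ^ 2 * b⁻¹) * b ^ 2 * a ^ 2 = b * a * (a * b * a) * a := by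
          rw [pow_two, pow_two]; group
      _ = b * a * (b * a * b) * a := by rw [h]
      _ = (b * a * b) * (a * b * a) := by group
      _ = (b * a * b) * (b * a * b) := by rw [h]
  rw [hE]
  exact hcomm.pow_left 2

theorem braid_aux_shift (h : a * b * a = b * a * b) :
    b ^ 2 = a * (b * a ^ 2 * b⁻¹) * a⁻¹ := by
  symm
  calc a * (b * a ^ 2 * b⁻¹) * a⁻¹ = (a * b * a) * (a * b⁻¹ * a⁻¹) := by
        rw [pow_two]; group
    _ = (b * a * b) * (a * b⁻¹ * a⁻¹) := by rw [h]
    _ = b * (a * b * a) * (b⁻¹ * a⁻¹) := by group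
    _ = b * (b * a * b) * (b⁻¹ * a⁻¹) := by rw [h]
    _ = b ^ 2 := by rw [pow_two]; group

theorem commute_conj {G : Type*} [Group G] {x y : G} (c : G) (h : Commute x y) :
    Commute (c * x * c⁻¹) (c * y * c⁻¹) := by
  have hx := h.eq
  show _ = _
  calc (c * x * c⁻¹) * (c * y * c⁻¹) = c * (x * y) * c⁻¹ := by group
    _ = c * (y * x) * c⁻¹ := by rw [hx]
    _ = (c * y * c⁻¹) * (c * x * c⁻¹) := by group

theorem conj_conj_comm {G : Type*} [Group G] {a c : G} (s : G) (h : Commute a c) :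
    c * (a * s * a⁻¹) * c⁻¹ = a * (c * s * c⁻¹) * a⁻¹ := by
  have h1 := h.eq
  have h2 := h.inv_inv.eq
  calc c * (a * s * a⁻¹) * c⁻¹ = (c * a) * s * (a⁻¹ * c⁻¹) := by group
    _ = (a * c) * s * (a⁻¹ * c⁻¹) := by rw [← h1]
    _ = (a * c) * s * (c⁻¹ * a⁻¹) := by rw [← h2]
    _ = a * (c * s * c⁻¹) * a⁻¹ := by group

theorem commute_conj3 {G : Type*} [Group G] {x y z c : G} (h : Commute x (y * x * z))
    (hcz : Commute c z) :
    Commute (c * x * c⁻¹) ((c * y * c⁻¹) * (c * x * c⁻¹) * z) := by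
  have h2 := hcz.inv_left.eq
  have h1 : (c * y * c⁻¹) * (c * x * c⁻¹) * z = c * (y * x * z) * c⁻¹ := by
    calc (c * y * c⁻¹) * (c * x * c⁻¹) * z = c * (y * x) * (c⁻¹ * z) := by group
      _ = c * (y * x) * (z * c⁻¹) := by rw [h2]
      _ = c * (y * x * z) * c⁻¹ := by group
  rw [h1]
  exact commute_conj c h

theorem commute_conj3' {G : Type*} [Group G] {x y z c : G} (h : Commute x (z * x * y))
    (hcz : Commute c z) :
    Commute (c * x * c⁻¹) (z * (c * x * c⁻¹) * (c * y * c⁻¹)) := by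
  have h2 := hcz.eq
  have h1 : z * (c * x * c⁻¹) * (c * y * c⁻¹) = c * (z * x * y) * c⁻¹ := by
    calc z * (c * x * c⁻¹) * (c * y * c⁻¹) = (z * c) * (x * y) * c⁻¹ := by group
      _ = (c * z) * (x * y) * c⁻¹ := by rw [← h2]
      _ = c * (z * x * y) * c⁻¹ := by group
  rw [h1]
  exact commute_conj c h

end GenericGroup

namespace BraidAux
variable (n : ℕ)

theorem rel_one {r : FreeGroup (Fin (n - 1))} (hr : r ∈ braidRels n) :
    PresentedGroup.mk (braidRels n) r = 1 :=
  (QuotientGroup.eq_one_iff r).mpr (Subgroup.subset_normalClosure hr)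

theorem prel (i j : Fin (n - 1)) (hij : (i : ℕ) + 1 = (j : ℕ)) :
    (PresentedGroup.of j : BraidGroup n) * PresentedGroup.of i * PresentedGroup.of j =
      PresentedGroup.of i * PresentedGroup.of j * PresentedGroup.of i := by
  have hmem : (FreeGroup.of j * FreeGroup.of i * FreeGroup.of j) *
      (FreeGroup.of i * FreeGroup.of j * FreeGroup.of i)⁻¹ ∈ braidRels n :=
    ⟨i, j, Or.inl ⟨hij, rfl⟩⟩
  have h1 := rel_one n hmem
  rw [map_mul, map_inv, map_mul, map_mul, map_mul] at h1
  exact mul_inv_eq_one.mp h1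

theorem pcomm (i j : Fin (n - 1)) (hij : (i : ℕ) + 1 < (j : ℕ)) :
    (PresentedGroup.of i : BraidGroup n) * PresentedGroup.of j =
      PresentedGroup.of j * PresentedGroup.of i := by
  have hmem : (FreeGroup.of i * FreeGroup.of j) * (FreeGroup.of j * FreeGroup.of i)⁻¹ ∈
      braidRels n := ⟨i, j, Or.inr ⟨hij, rfl⟩⟩
  have h1 := rel_one n hmem
  rw [map_mul, map_inv, map_mul, map_mul] at h1
  exact mul_inv_eq_one.mp h1

theorem sigma_braid (t : ℕ) (h1 : 1 ≤ t) (h2 : t + 2 ≤ n) :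
    braidSigma n t * braidSigma n (t + 1) * braidSigma n t =
      braidSigma n (t + 1) * braidSigma n t * braidSigma n (t + 1) := by
  have hi : t - 1 < n - 1 := by omega
  have hj : t + 1 - 1 < n - 1 := by omega
  simp only [braidSigma, dif_pos hi, dif_pos hj]
  exact (prel n ⟨t - 1, hi⟩ ⟨t + 1 - 1, hj⟩ (by simp; omega)).symm

theorem sigma_comm (s t : ℕ) (h1 : 1 ≤ s) (h2 : s + 2 ≤ t) :
    Commute (braidSigma n s) (braidSigma n t) := by
  by_cases ht : t - 1 < n - 1
  · have hs : s - 1 < n - 1 := by omega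
    simp only [braidSigma, dif_pos hs, dif_pos ht]
    exact pcomm n ⟨s - 1, hs⟩ ⟨t - 1, ht⟩ (by simp; omega)
  · simp only [braidSigma, dif_neg ht]
    exact Commute.one_right _

theorem braidS_base (i : ℕ) : braidS n i (i + 1) = braidSigma n i ^ 2 := by
  simp [braidS, show i + 1 - i - 1 = 0 from by omega]

theorem braidS_succ (i j : ℕ) (hij : i + 1 ≤ j) :
    braidS n i (j + 1) = braidSigma n j * braidS n i j * (braidSigma n j)⁻¹ := by
  have h1 : j + 1 - i - 1 = (j - i - 1) + 1 := by omega
  have h2 : i + 1 + 1 * (j - i - 1) = j := by omega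
  rw [braidS, braidS, h1, List.range'_concat, h2]
  simp only [List.reverse_append, List.reverse_cons, List.reverse_nil, List.nil_append,
    List.singleton_append, List.map_cons, List.prod_cons]
  group

/-- `σ_t` commutes with `s_{i,j}` when `t ≥ j + 1`. -/
theorem comm_sigma_s_ge (i : ℕ) (hi : 1 ≤ i) :
    ∀ j, i + 1 ≤ j → ∀ t, j + 1 ≤ t → Commute (braidSigma n t) (braidS n i j) := by
  intro j hj
  induction j, hj using Nat.le_induction with
  | base =>
      intro t ht
      rw [braidS_base]
      exact (sigma_comm n i t hi (by omega)).symm.pow_right 2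
  | succ j hj ih =>
      intro t ht
      rw [braidS_succ n i j (by omega)]
      have h1 : Commute (braidSigma n t) (braidSigma n j) :=
        (sigma_comm n j t (by omega) (by omega)).symm
      exact (h1.mul_right (ih t (by omega))).mul_right h1.inv_right

/-- `σ_t` commutes with `s_{i,j}` when `i + 1 ≤ t ≤ j - 2`. -/
theorem comm_sigma_s_mid (i t : ℕ) (hi : 1 ≤ i) (hit : i + 1 ≤ t) :
    ∀ j, t + 2 ≤ j → j ≤ n → Commute (braidSigma n t) (braidS n i j) := by
  intro j hj
  induction j, hj using Nat.le_induction with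
  | base =>
      intro hn2
      rw [show t + 2 = (t + 1) + 1 from by omega, braidS_succ n i (t + 1) (by omega),
        braidS_succ n i t (by omega)]
      exact braid_aux_mid _ _ _ (sigma_braid n t (by omega) (by omega))
        (comm_sigma_s_ge n i hi t hit (t + 1) (by omega)).eq
  | succ j hj ih =>
      intro hn2
      rw [braidS_succ n i j (by omega)]
      have h1 : Commute (braidSigma n t) (braidSigma n j) :=
        sigma_comm n t j (by omega) (by omega)
      exact (h1.mul_right (ih (by omega))).mul_right h1.inv_right

/-- `s_{i+1,j} = σ_i s_{i,j} σ_i⁻¹`. -/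
theorem braidS_shift (i : ℕ) (hi : 1 ≤ i) :
    ∀ j, i + 2 ≤ j → j ≤ n →
      braidS n (i + 1) j = braidSigma n i * braidS n i j * (braidSigma n i)⁻¹ := by
  intro j hj
  induction j, hj using Nat.le_induction with
  | base =>
      intro hn2
      rw [show i + 2 = (i + 1) + 1 from by omega, braidS_base, braidS_succ n i (i + 1) (by omega),
        braidS_base]
      exact braid_aux_shift _ _ (sigma_braid n i hi (by omega))
  | succ j hj ih =>
      intro hn2
      rw [braidS_succ n (i + 1) j (by omega), braidS_succ n i j (by omega), ih (by omega)]
      exact conj_conj_comm _ (sigma_comm n i j hi (by omega))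

theorem claimB (j : ℕ) (hj : 1 ≤ j) (hn2 : j + 2 ≤ n) :
    Commute (braidS n (j + 1) (j + 2))
      (braidS n j (j + 2) * braidS n (j + 1) (j + 2) * braidS n j (j + 1)) := by
  have h := sigma_braid n j hj hn2
  rw [show j + 2 = (j + 1) + 1 from by omega, braidS_base, braidS_succ n j (j + 1) (by omega),
    braidS_base]
  exact braid_aux_delta _ _ h

theorem claimA (j : ℕ) (hj : 1 ≤ j) :
    ∀ l, j + 2 ≤ l → l ≤ n →
      Commute (braidS n (j + 1) l)
        (braidS n j l * braidS n (j + 1) l * braidS n j (j + 1)) := by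
  intro l hl
  induction l, hl using Nat.le_induction with
  | base => intro hn2; exact claimB n j hj hn2
  | succ l hl ih =>
      intro hn2
      rw [braidS_succ n (j + 1) l (by omega), braidS_succ n j l (by omega)]
      exact commute_conj3 (ih (by omega))
        (comm_sigma_s_ge n j hj (j + 1) (by omega) l (by omega))

theorem mainM (j l : ℕ) (hj : 1 ≤ j) (hl : l ≤ n) :
    ∀ k, j + 1 ≤ k → k < l →
      Commute (braidS n k l) (braidS n j l * braidS n k l * braidS n j k) := by
  intro k hk
  induction k, hk using Nat.le_induction with
  | base => intro hkl; exact claimA n j hj l (by omega) hl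
  | succ k hk ih =>
      intro hkl
      rw [braidS_shift n k (by omega) l (by omega) hl, braidS_succ n j k (by omega)]
      exact commute_conj3' (ih (by omega))
        (comm_sigma_s_mid n j k hj (by omega) l (by omega) hl)

end BraidAux

/-- Artin–Markov relation (8): for `ε = ±1` and `1 ≤ j < k < l ≤ n`,
`s_{j,k} s_{k,l}^ε = {s_{k,l}^ε, s_{j,l} s_{k,l}} s_{j,k}` in `B_n`, where `{a,b} = b⁻¹ a b`. -/
theorem braid_s_s_rel (n : ℕ) (hn : 2 ≤ n) (ε : ℤ) (hε : ε = 1 ∨ ε = -1)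
    (j k l : ℕ) (hj : 1 ≤ j) (hjk : j < k) (hkl : k < l) (hl : l ≤ n) :
    braidS n j k * braidS n k l ^ ε =
      braidConj (braidS n k l ^ ε) (braidS n j l * braidS n k l) * braidS n j k := by
  have hM := BraidAux.mainM n j l hj hl k hjk hkl
  have h := (hM.zpow_left ε).eq
  rw [braidConj]
  calc braidS n j k * braidS n k l ^ ε
      = (braidS n j l * braidS n k l)⁻¹ *
          ((braidS n j l * braidS n k l * braidS n j k) * braidS n k l ^ ε) := by group
    _ = (braidS n j l * braidS n k l)⁻¹ *
          (braidS n k l ^ ε * (braidS n j l * braidS n k l * braidS n j k)) := by rw [← h]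
    _ = (braidS n j l * braidS n k l)⁻¹ * braidS n k l ^ ε * (braidS n j l * braidS n k l) *
          braidS n j k := by group
end

section
/- For every sign ε ∈ {1,-1} and all indices 1 ≤ j < k < l ≤ n, the identity s_{j,k}^{-1} s_{j,l}^ε = {s_{j,l}^ε, s_{k,l}^{-1} s_{j,l}^{-1}} s_{j,k}^{-1} holds in the braid group B_n, where {a,b} = b^{-1}ab. -/
/-! ### Auxiliary lemmas -/

/-- Relations hold in the presented group. -/
lemma braid_mk_rel_one {n : ℕ} {r : FreeGroup (Fin (n - 1))} (hr : r ∈ braidRels n) :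
    PresentedGroup.mk (braidRels n) r = 1 :=
  (QuotientGroup.eq_one_iff r).mpr (Subgroup.subset_normalClosure hr)

/-- The braid relation `σ_t σ_{t+1} σ_t = σ_{t+1} σ_t σ_{t+1}`. -/
lemma braid_rel (n t : ℕ) (ht : 1 ≤ t) (htn : t + 2 ≤ n) :
    braidSigma n t * braidSigma n (t + 1) * braidSigma n t =
      braidSigma n (t + 1) * braidSigma n t * braidSigma n (t + 1) := by
  have h1 : t - 1 < n - 1 := by omega
  have h2 : (t + 1) - 1 < n - 1 := by omega
  have e1 : braidSigma n t = PresentedGroup.of ⟨t - 1, h1⟩ := by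
    rw [braidSigma, dif_pos h1]
  have e2 : braidSigma n (t + 1) = PresentedGroup.of ⟨(t + 1) - 1, h2⟩ := by
    rw [braidSigma, dif_pos h2]
  have hrel : ((FreeGroup.of (⟨(t+1)-1, h2⟩ : Fin (n-1)) *
      FreeGroup.of (⟨t-1, h1⟩ : Fin (n-1)) * FreeGroup.of (⟨(t+1)-1, h2⟩ : Fin (n-1))) *
      (FreeGroup.of (⟨t-1, h1⟩ : Fin (n-1)) * FreeGroup.of (⟨(t+1)-1, h2⟩ : Fin (n-1)) *
        FreeGroup.of (⟨t-1, h1⟩ : Fin (n-1)))⁻¹) ∈ braidRels n := by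
    refine ⟨⟨t - 1, h1⟩, ⟨(t+1)-1, h2⟩, Or.inl ⟨by simp; omega, rfl⟩⟩
  have := braid_mk_rel_one hrel
  rw [map_mul, map_inv, map_mul, map_mul, map_mul, map_mul] at this
  have key : (PresentedGroup.of (⟨(t+1)-1, h2⟩ : Fin (n-1)) :
        BraidGroup n) * PresentedGroup.of ⟨t-1, h1⟩ * PresentedGroup.of ⟨(t+1)-1, h2⟩ =
      PresentedGroup.of ⟨t-1, h1⟩ * PresentedGroup.of ⟨(t+1)-1, h2⟩ *
        PresentedGroup.of ⟨t-1, h1⟩ := by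
    have h' := mul_inv_eq_one.mp this
    exact h'
  rw [e1, e2]
  exact key.symm

/-- Distant generators commute. -/
lemma braid_comm_sigma (n a b : ℕ) (ha : 1 ≤ a) (hab : a + 2 ≤ b) :
    Commute (braidSigma n a) (braidSigma n b) := by
  by_cases h1 : a - 1 < n - 1
  · by_cases h2 : b - 1 < n - 1
    · have e1 : braidSigma n a = PresentedGroup.of ⟨a - 1, h1⟩ := by
        rw [braidSigma]; exact dif_pos h1
      have e2 : braidSigma n b = PresentedGroup.of ⟨b - 1, h2⟩ := by
        rw [braidSigma]; exact dif_pos h2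
      have hrel : ((FreeGroup.of (⟨a-1, h1⟩ : Fin (n-1)) *
          FreeGroup.of (⟨b-1, h2⟩ : Fin (n-1))) *
          (FreeGroup.of (⟨b-1, h2⟩ : Fin (n-1)) *
            FreeGroup.of (⟨a-1, h1⟩ : Fin (n-1)))⁻¹) ∈ braidRels n := by
        refine ⟨⟨a - 1, h1⟩, ⟨b - 1, h2⟩, Or.inr ⟨by simp; omega, rfl⟩⟩
      have h0 := braid_mk_rel_one hrel
      rw [map_mul, map_inv, map_mul, map_mul] at h0
      have key := mul_inv_eq_one.mp h0
      rw [e1, e2]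
      exact key
    · have e2 : braidSigma n b = 1 := by rw [braidSigma]; exact dif_neg h2
      rw [e2]; exact Commute.one_right _
  · have e1 : braidSigma n a = 1 := by rw [braidSigma]; exact dif_neg h1
    rw [e1]; exact Commute.one_left _

/-- Recursion: `s_{i,j+1} = σ_j s_{i,j} σ_j⁻¹`. -/
lemma braidS_succ (n i j : ℕ) (hij : i < j) :
    braidS n i (j + 1) = braidSigma n j * braidS n i j * (braidSigma n j)⁻¹ := by
  have h1 : j + 1 - i - 1 = (j - i - 1) + 1 := by omega
  have h2 : (i + 1) + (j - i - 1) = j := by omega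
  rw [braidS, braidS, h1, List.range'_1_concat, h2, List.reverse_append]
  simp only [List.reverse_singleton, List.map_append, List.prod_append, List.map_cons,
    List.map_nil, List.prod_cons, List.prod_nil, List.singleton_append, mul_one, mul_inv_rev]
  group

/-- `s_{i,i+1} = σ_i ^ 2`. -/
lemma braidS_self (n i : ℕ) : braidS n i (i + 1) = braidSigma n i ^ 2 := by
  simp [braidS]

/-- Generators far to the right commute with `s_{i,j}`. -/
lemma braid_comm_S (n i j m : ℕ) (hi : 1 ≤ i) (hij : i < j) (hm : j + 1 ≤ m) :
    Commute (braidSigma n m) (braidS n i j) := by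
  have hbase : ∀ t ∈ (List.range' (i + 1) (j - i - 1)).reverse.map (braidSigma n),
      Commute (braidSigma n m) t := by
    intro t ht
    simp only [List.mem_map, List.mem_reverse, List.mem_range'_1] at ht
    obtain ⟨u, hu, rfl⟩ := ht
    exact (braid_comm_sigma n u m (by omega) (by omega)).symm
  have hW : Commute (braidSigma n m)
      ((List.range' (i + 1) (j - i - 1)).reverse.map (braidSigma n)).prod :=
    Commute.list_prod_right _ _ hbase
  have hs : Commute (braidSigma n m) (braidSigma n i ^ 2) :=
    ((braid_comm_sigma n i m hi (by omega)).symm).pow_right 2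
  rw [braidS]
  exact (hW.mul_right hs).mul_right hW.inv_right

/-- The key computation in an abstract group: given the braid relation `aba = bab`,
with `S12 = a²`, `S13 = b a² b⁻¹`, `S23 = b²`, we have
`S12⁻¹ S13^ε S12 = S13 S23 S13^ε S23⁻¹ S13⁻¹`. -/
lemma key_base {G : Type*} [Group G] (a b : G) (h : a * b * a = b * a * b) (ε : ℤ) :
    (a ^ 2)⁻¹ * (b * a ^ 2 * b⁻¹) ^ ε * a ^ 2 =
      (b * a ^ 2 * b⁻¹) * b ^ 2 * (b * a ^ 2 * b⁻¹) ^ ε * (b ^ 2)⁻¹ *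
        (b * a ^ 2 * b⁻¹)⁻¹ := by
  have hda : a * b * a * a = b * (a * b * a) := by
    rw [show b * (a * b * a) = b * a * b * a by simp [pow_two, mul_assoc], ← h]
  have hdb : a * b * a * b = a * (a * b * a) := by
    rw [show a * b * a * b = a * (b * a * b) by simp [pow_two, mul_assoc], ← h]
  have hca : Commute ((a * b * a) ^ 2) a := by
    show (a * b * a) ^ 2 * a = a * (a * b * a) ^ 2
    calc (a * b * a) ^ 2 * a = (a * b * a) * (a * b * a * a) := by simp [pow_two, mul_assoc]
      _ = (a * b * a) * (b * (a * b * a)) := by rw [hda]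
      _ = (a * b * a * b) * (a * b * a) := by simp [pow_two, mul_assoc]
      _ = (a * (a * b * a)) * (a * b * a) := by rw [hdb]
      _ = a * (a * b * a) ^ 2 := by simp [pow_two, mul_assoc]
  have hcb : Commute ((a * b * a) ^ 2) b := by
    show (a * b * a) ^ 2 * b = b * (a * b * a) ^ 2
    calc (a * b * a) ^ 2 * b = (a * b * a) * (a * b * a * b) := by simp [pow_two, mul_assoc]
      _ = (a * b * a) * (a * (a * b * a)) := by rw [hdb]
      _ = (a * b * a * a) * (a * b * a) := by simp [pow_two, mul_assoc]
      _ = (b * (a * b * a)) * (a * b * a) := by rw [hda]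
      _ = b * (a * b * a) ^ 2 := by simp [pow_two, mul_assoc]
  have hc13 : Commute ((a * b * a) ^ 2) ((b * a ^ 2 * b⁻¹) ^ ε) :=
    ((hcb.mul_right (hca.pow_right 2)).mul_right hcb.inv_right).zpow_right ε
  have hZ : a ^ 2 * (b * a ^ 2 * b⁻¹) * b ^ 2 = (a * b * a) ^ 2 := by
    calc a ^ 2 * (b * a ^ 2 * b⁻¹) * b ^ 2 = a * (a * b * a * a) * b := by simp [pow_two, mul_assoc]
      _ = a * (b * (a * b * a)) * b := by rw [hda]
      _ = a * b * (a * b * a * b) := by simp [pow_two, mul_assoc]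
      _ = a * b * (a * (a * b * a)) := by rw [hdb]
      _ = (a * b * a) ^ 2 := by simp [pow_two, mul_assoc]
  have hS12 : (a ^ 2)⁻¹ = (b * a ^ 2 * b⁻¹) * b ^ 2 * ((a * b * a) ^ 2)⁻¹ := by
    rw [← hZ]; group
  rw [hS12]
  have hcc := hc13.inv_left.eq
  calc (b * a ^ 2 * b⁻¹) * b ^ 2 * ((a * b * a) ^ 2)⁻¹ * (b * a ^ 2 * b⁻¹) ^ ε * a ^ 2
      = (b * a ^ 2 * b⁻¹) * b ^ 2 * (((a * b * a) ^ 2)⁻¹ * (b * a ^ 2 * b⁻¹) ^ ε) * a ^ 2 := by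
        group
    _ = (b * a ^ 2 * b⁻¹) * b ^ 2 * ((b * a ^ 2 * b⁻¹) ^ ε * ((a * b * a) ^ 2)⁻¹) * a ^ 2 := by
        rw [hcc]
    _ = (b * a ^ 2 * b⁻¹) * b ^ 2 * (b * a ^ 2 * b⁻¹) ^ ε * (((a * b * a) ^ 2)⁻¹ * a ^ 2) := by
        group
    _ = (b * a ^ 2 * b⁻¹) * b ^ 2 * (b * a ^ 2 * b⁻¹) ^ ε *
          ((a ^ 2 * (b * a ^ 2 * b⁻¹) * b ^ 2)⁻¹ * a ^ 2) := by rw [hZ]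
    _ = (b * a ^ 2 * b⁻¹) * b ^ 2 * (b * a ^ 2 * b⁻¹) ^ ε * (b ^ 2)⁻¹ *
          (b * a ^ 2 * b⁻¹)⁻¹ := by simp [pow_two, mul_assoc]

/-- Transfer the relation along conjugation. -/
lemma conj_transfer {G : Type*} [Group G] (ε : ℤ) (g x y z : G)
    (h : x⁻¹ * y ^ ε * x = y * z * y ^ ε * z⁻¹ * y⁻¹) :
    (g * x * g⁻¹)⁻¹ * (g * y * g⁻¹) ^ ε * (g * x * g⁻¹) =
      (g * y * g⁻¹) * (g * z * g⁻¹) * (g * y * g⁻¹) ^ ε * (g * z * g⁻¹)⁻¹ *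
        (g * y * g⁻¹)⁻¹ := by
  rw [conj_zpow]
  calc (g * x * g⁻¹)⁻¹ * (g * y ^ ε * g⁻¹) * (g * x * g⁻¹)
      = g * (x⁻¹ * y ^ ε * x) * g⁻¹ := by group
    _ = g * (y * z * y ^ ε * z⁻¹ * y⁻¹) * g⁻¹ := by rw [h]
    _ = (g * y * g⁻¹) * (g * z * g⁻¹) * (g * y ^ ε * g⁻¹) * (g * z * g⁻¹)⁻¹ *
          (g * y * g⁻¹)⁻¹ := by group

section main

variable (n : ℕ) (ε : ℤ)

/-- The conjugation form of the relation. -/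
def braidP (j k l : ℕ) : Prop :=
  (braidS n j k)⁻¹ * braidS n j l ^ ε * braidS n j k =
    braidS n j l * braidS n k l * braidS n j l ^ ε * (braidS n k l)⁻¹ * (braidS n j l)⁻¹

lemma braidP_base (j : ℕ) (hj : 1 ≤ j) (hn : j + 2 ≤ n) : braidP n ε j (j + 1) (j + 2) := by
  unfold braidP
  have e12 : braidS n j (j + 1) = braidSigma n j ^ 2 := braidS_self n j
  have e23 : braidS n (j + 1) (j + 2) = braidSigma n (j + 1) ^ 2 := braidS_self n (j + 1)
  have e13 : braidS n j (j + 2) =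
      braidSigma n (j + 1) * braidSigma n j ^ 2 * (braidSigma n (j + 1))⁻¹ := by
    rw [braidS_succ n j (j + 1) (by omega), braidS_self]
  rw [e12, e23, e13]
  exact key_base (braidSigma n j) (braidSigma n (j + 1)) (braid_rel n j hj hn) ε

lemma braid_aux_conj {G : Type*} [Group G] (a b : G) (h : a * b * a = b * a * b) :
    b * a⁻¹ * b⁻¹ = a⁻¹ * b⁻¹ * a := by
  calc b * a⁻¹ * b⁻¹
      = a⁻¹ * b⁻¹ * (b * a * b) * a⁻¹ * b⁻¹ := by group
    _ = a⁻¹ * b⁻¹ * (a * b * a) * a⁻¹ * b⁻¹ := by rw [← h]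
    _ = a⁻¹ * b⁻¹ * a := by group

lemma braid_aux_conj2 {G : Type*} [Group G] (a b : G) (h : a * b * a = b * a * b) :
    b * a * b⁻¹ = a⁻¹ * b * a := by
  calc b * a * b⁻¹
      = a⁻¹ * (a * b * a) * b⁻¹ := by group
    _ = a⁻¹ * (b * a * b) * b⁻¹ := by rw [h]
    _ = a⁻¹ * b * a := by group

lemma braid_aux_A2 {G : Type*} [Group G] (a b W : G) (h : a * b * a = b * a * b)
    (hc1 : b * W = W * b) :
    a * (b * a * W * a⁻¹ * b⁻¹) = (b * a * W * a⁻¹ * b⁻¹) * a := by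
  calc a * (b * a * W * a⁻¹ * b⁻¹)
      = (a * b * a) * W * (a⁻¹ * b⁻¹) := by group
    _ = (b * a * b) * W * (a⁻¹ * b⁻¹) := by rw [h]
    _ = b * a * (b * W) * (a⁻¹ * b⁻¹) := by group
    _ = b * a * (W * b) * (a⁻¹ * b⁻¹) := by rw [hc1]
    _ = b * a * W * (b * a⁻¹ * b⁻¹) := by group
    _ = b * a * W * (a⁻¹ * b⁻¹ * a) := by rw [braid_aux_conj a b h]
    _ = (b * a * W * a⁻¹ * b⁻¹) * a := by group

lemma braid_aux_A3 {G : Type*} [Group G] (a b : G) (h : a * b * a = b * a * b) :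
    b ^ 2 = a * b * a ^ 2 * (b⁻¹ * a⁻¹) := by
  rw [pow_two, pow_two]
  calc b * b
      = b * a * (a⁻¹ * b * a) * a⁻¹ := by group
    _ = b * a * (b * a * b⁻¹) * a⁻¹ := by rw [braid_aux_conj2 a b h]
    _ = (b * a * b) * (a * b⁻¹ * a⁻¹) := by group
    _ = (a * b * a) * (a * b⁻¹ * a⁻¹) := by rw [← h]
    _ = a * b * (a * a) * (b⁻¹ * a⁻¹) := by group

lemma braidP_stepB (j k : ℕ) (hj : 1 ≤ j) (hjk : j < k) (hn : k + 2 ≤ n)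
    (h : braidP n ε j k (k + 1)) : braidP n ε j (k + 1) (k + 2) := by
  unfold braidP at h ⊢
  have brel := braid_rel n k (by omega) hn
  set a := braidSigma n k with ha
  set b := braidSigma n (k + 1) with hb
  set W := braidS n j k with hW
  set g : BraidGroup n := a * b with hg
  have hc1 : b * W = W * b := (braid_comm_S n j k (k + 1) hj hjk le_rfl).eq
  -- (i)
  have hx : braidS n j (k + 1) = g * W * g⁻¹ := by
    rw [braidS_succ n j k hjk, hg, ← hW, ← ha, mul_inv_rev]
    calc a * W * a⁻¹
        = a * (W * b) * (b⁻¹ * a⁻¹) := by group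
      _ = a * (b * W) * (b⁻¹ * a⁻¹) := by rw [← hc1]
      _ = a * b * W * (b⁻¹ * a⁻¹) := by group
  -- the element s_{j,k+2} commutes with a = σ_k
  have e3 : braidS n j (k + 2) = b * a * W * a⁻¹ * b⁻¹ := by
    rw [braidS_succ n j (k + 1) (by omega), braidS_succ n j k hjk, ← ha, ← hb, ← hW]
    group
  have hcomm2 : a * braidS n j (k + 2) = braidS n j (k + 2) * a := by
    rw [e3]; exact braid_aux_A2 a b W brel hc1
  -- (ii)
  have e2 : braidS n j (k + 2) = b * braidS n j (k + 1) * b⁻¹ := by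
    rw [braidS_succ n j (k + 1) (by omega), ← hb]
  have hy : braidS n j (k + 2) = g * braidS n j (k + 1) * g⁻¹ := by
    calc braidS n j (k + 2)
        = a * braidS n j (k + 2) * a⁻¹ := by rw [hcomm2]; group
      _ = a * (b * braidS n j (k + 1) * b⁻¹) * a⁻¹ := by rw [e2]
      _ = (a * b) * braidS n j (k + 1) * (b⁻¹ * a⁻¹) := by group
      _ = g * braidS n j (k + 1) * g⁻¹ := by rw [hg, mul_inv_rev]
  -- (iii)
  have hz : braidS n (k + 1) (k + 2) = g * braidS n k (k + 1) * g⁻¹ := by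
    rw [braidS_self, braidS_self, ← ha, ← hb, hg, mul_inv_rev]
    exact braid_aux_A3 a b brel
  rw [hx, hy, hz]
  rw [hW] at h
  exact conj_transfer ε g _ _ _ h

lemma braidP_stepA (j k l : ℕ) (hj : 1 ≤ j) (hjk : j < k) (hkl : k < l)
    (h : braidP n ε j k l) : braidP n ε j k (l + 1) := by
  unfold braidP at h ⊢
  set g := braidSigma n l with hg
  have hx : braidS n j k = g * braidS n j k * g⁻¹ := by
    have := (braid_comm_S n j k l hj hjk (by omega)).eq
    rw [hg, show braidSigma n l * braidS n j k * (braidSigma n l)⁻¹ =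
        (braidSigma n l * braidS n j k) * (braidSigma n l)⁻¹ by group, this]
    group
  have hy : braidS n j (l + 1) = g * braidS n j l * g⁻¹ :=
    braidS_succ n j l (by omega)
  have hz : braidS n k (l + 1) = g * braidS n k l * g⁻¹ :=
    braidS_succ n k l hkl
  rw [hx, hy, hz]
  exact conj_transfer ε g _ _ _ h

lemma braidP_diag (j k : ℕ) (hj : 1 ≤ j) (hjk : j + 1 ≤ k) (hn : k + 1 ≤ n) :
    braidP n ε j k (k + 1) := by
  induction k, hjk using Nat.le_induction with
  | base => exact braidP_base n ε j hj (by omega)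
  | succ k hk ih => exact braidP_stepB n ε j k hj (by omega) (by omega) (ih (by omega))

lemma braidP_all (j k l : ℕ) (hj : 1 ≤ j) (hjk : j < k) (hkl : k + 1 ≤ l) (hl : l ≤ n) :
    braidP n ε j k l := by
  induction l, hkl using Nat.le_induction with
  | base => exact braidP_diag n ε j k hj hjk hl
  | succ l hl' ih => exact braidP_stepA n ε j k l hj hjk (by omega) (ih (by omega))

end main

/-- Artin–Markov relation (9): for `ε = ±1` and `1 ≤ j < k < l ≤ n`,
`s_{j,k}⁻¹ s_{j,l}^ε = {s_{j,l}^ε, s_{k,l}⁻¹ s_{j,l}⁻¹} s_{j,k}⁻¹` in `B_n`,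
where `{a,b} = b⁻¹ a b`. -/
theorem braid_s_inv_s_rel' (n : ℕ) (hn : 2 ≤ n) (ε : ℤ) (hε : ε = 1 ∨ ε = -1)
    (j k l : ℕ) (hj : 1 ≤ j) (hjk : j < k) (hkl : k < l) (hl : l ≤ n) :
    (braidS n j k)⁻¹ * braidS n j l ^ ε =
      braidConj (braidS n j l ^ ε) ((braidS n k l)⁻¹ * (braidS n j l)⁻¹) *
        (braidS n j k)⁻¹ := by
  have h := braidP_all n ε j k l hj hjk hkl hl
  unfold braidP at h
  unfold braidConj
  calc (braidS n j k)⁻¹ * braidS n j l ^ ε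
      = ((braidS n j k)⁻¹ * braidS n j l ^ ε * braidS n j k) * (braidS n j k)⁻¹ := by group
    _ = (braidS n j l * braidS n k l * braidS n j l ^ ε * (braidS n k l)⁻¹ *
          (braidS n j l)⁻¹) * (braidS n j k)⁻¹ := by rw [h]
    _ = ((braidS n k l)⁻¹ * (braidS n j l)⁻¹)⁻¹ * braidS n j l ^ ε *
          ((braidS n k l)⁻¹ * (braidS n j l)⁻¹) * (braidS n j k)⁻¹ := by group
end

section
/- For all signs δ, ε ∈ {1,-1} and all indices i, j, k, l with either 1 ≤ j < i < k < l ≤ n or 1 ≤ i < k < j < l ≤ n, the elements s_{i,k}^δ and s_{j,l}^ε commute in the braid group B_n: s_{i,k}^δ s_{j,l}^ε = s_{j,l}^ε s_{i,k}^δ. -/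
lemma braid_rel_one {n : ℕ} {r : FreeGroup (Fin (n-1))} (hr : r ∈ braidRels n) :
    PresentedGroup.mk (braidRels n) r = 1 :=
  (QuotientGroup.eq_one_iff r).mpr (Subgroup.subset_normalClosure hr)

/-- far commutation -/
lemma sigma_comm {n : ℕ} {a b : ℕ} (ha : 1 ≤ a) (hab : a + 2 ≤ b) :
    Commute (braidSigma n a) (braidSigma n b) := by
  unfold braidSigma
  by_cases hb : b - 1 < n - 1
  · have haa : a - 1 < n - 1 := by omega
    rw [dif_pos hb, dif_pos haa]
    have hr : (FreeGroup.of (⟨a-1, haa⟩ : Fin (n-1)) * FreeGroup.of (⟨b-1, hb⟩ : Fin (n-1))) *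
        (FreeGroup.of (⟨b-1, hb⟩ : Fin (n-1)) * FreeGroup.of (⟨a-1, haa⟩ : Fin (n-1)))⁻¹ ∈ braidRels n := by
      exact ⟨⟨a-1, haa⟩, ⟨b-1, hb⟩, Or.inr ⟨by simp; omega, rfl⟩⟩
    have := braid_rel_one hr
    rw [map_mul, map_inv] at this
    have h2 := mul_inv_eq_one.mp this
    simp only [map_mul] at h2
    unfold Commute SemiconjBy PresentedGroup.of
    exact h2
  · rw [dif_neg hb]
    exact Commute.one_right _

/-- braid relation σ_{t} σ_{t+1} σ_t = σ_{t+1} σ_t σ_{t+1} -/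
lemma sigma_braid {n : ℕ} {t : ℕ} (ht : 1 ≤ t) (htn : t + 2 ≤ n) :
    braidSigma n (t+1) * braidSigma n t * braidSigma n (t+1) =
      braidSigma n t * braidSigma n (t+1) * braidSigma n t := by
  unfold braidSigma
  have hb : (t+1) - 1 < n - 1 := by omega
  have ha : t - 1 < n - 1 := by omega
  rw [dif_pos hb, dif_pos ha]
  have hr : (FreeGroup.of (⟨t, hb⟩ : Fin (n-1)) * FreeGroup.of (⟨t-1, ha⟩ : Fin (n-1)) * FreeGroup.of (⟨t, hb⟩ : Fin (n-1))) *
      (FreeGroup.of (⟨t-1, ha⟩ : Fin (n-1)) * FreeGroup.of (⟨t, hb⟩ : Fin (n-1)) * FreeGroup.of (⟨t-1, ha⟩ : Fin (n-1)))⁻¹ ∈ braidRels n :=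
    ⟨⟨t-1, ha⟩, ⟨t, hb⟩, Or.inl ⟨by simp; omega, rfl⟩⟩
  have h1 := braid_rel_one hr
  rw [map_mul, map_inv] at h1
  have h2 := mul_inv_eq_one.mp h1
  simp only [map_mul] at h2
  have he : ((t+1) - 1 : ℕ) = t := by omega
  simp only [he]
  unfold PresentedGroup.of
  exact h2

/-- descending product σ_{a+m-1} σ_{a+m-2} ⋯ σ_a -/
def braidDesc (n a : ℕ) : ℕ → BraidGroup n
  | 0 => 1
  | m + 1 => braidSigma n (a + m) * braidDesc n a m

lemma braidDesc_eq_prod (n a m : ℕ) :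
    ((List.range' a m).reverse.map (braidSigma n)).prod = braidDesc n a m := by
  induction m with
  | zero => simp [braidDesc]
  | succ m ih =>
    rw [List.range'_concat]
    simp only [List.reverse_append, List.reverse_singleton, List.map_append, List.map_cons,
      List.prod_append, List.map_nil, List.prod_cons, List.prod_nil, List.singleton_append,
      List.map_cons, List.prod_cons]
    simp only [one_mul]
    rw [ih]
    rfl

/-- σ_u commutes with desc a m if u far above or far below -/
lemma sigma_desc_comm {n a m u : ℕ} (h : (1 ≤ a ∧ a + m + 1 ≤ u) ∨ (1 ≤ u ∧ u + 2 ≤ a)) :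
    Commute (braidSigma n u) (braidDesc n a m) := by
  induction m with
  | zero => exact Commute.one_right _
  | succ m ih =>
    have h1 : Commute (braidSigma n u) (braidSigma n (a + m)) := by
      rcases h with ⟨ha, hu⟩ | ⟨hu, ha⟩
      · exact (sigma_comm (by omega) (by omega)).symm
      · exact sigma_comm hu (by omega)
    exact h1.mul_right (ih (by omega))

/-- key shift lemma: σ_t · desc = desc · σ_{t+1} when both letters occur in desc -/
lemma sigma_desc_shift {n : ℕ} (a : ℕ) (ha : 1 ≤ a) :
    ∀ m t, a ≤ t → t + 2 ≤ a + m → a + m ≤ n →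
      braidSigma n t * braidDesc n a m = braidDesc n a m * braidSigma n (t + 1) := by
  intro m
  induction m with
  | zero => intro t h1 h2; omega
  | succ m ih =>
    intro t h1 h2 h3
    by_cases hcase : t + 2 ≤ a + m
    · -- σ_t commutes with top letter σ_{a+m}
      have hc : Commute (braidSigma n t) (braidSigma n (a + m)) :=
        sigma_comm (by omega) (by omega)
      show braidSigma n t * (braidSigma n (a+m) * braidDesc n a m) = _
      rw [← mul_assoc, hc.eq, mul_assoc, ih t h1 hcase (by omega)]
      simp [braidDesc, mul_assoc]
    · -- t = a + m - 1, i.e. a + m = t + 1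
      have ht1 : a + m = t + 1 := by omega
      obtain ⟨m', rfl⟩ : ∃ m', m = m' + 1 := ⟨m - 1, by omega⟩
      -- desc a (m'+2) = σ_{t+1} * σ_t * desc a m'
      have e1 : braidDesc n a (m' + 1 + 1) =
          braidSigma n (t+1) * (braidSigma n t * braidDesc n a m') := by
        show braidSigma n (a + (m'+1)) * (braidSigma n (a + m') * braidDesc n a m') = _
        have : a + (m' + 1) = t + 1 := ht1
        have h2' : a + m' = t := by omega
        rw [this, h2']
      rw [e1, ← mul_assoc, ← mul_assoc, ← mul_assoc]
      rw [← sigma_braid (show 1 ≤ t by omega) (show t + 2 ≤ n by omega)]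
      have hcomm : Commute (braidSigma n (t+1)) (braidDesc n a m') :=
        sigma_desc_comm (Or.inl ⟨ha, by omega⟩)
      rw [mul_assoc _ _ (braidDesc n a m'), mul_assoc _ _ (braidDesc n a m'),
        hcomm.eq]
      group

lemma braidS_eq (n i j : ℕ) :
    braidS n i j = braidDesc n (i+1) (j-i-1) * braidSigma n i ^ 2 *
      (braidDesc n (i+1) (j-i-1))⁻¹ := by
  rw [braidS, braidDesc_eq_prod]

/-- σ_t commutes with s_{j,l} for j+1 ≤ t ≤ l-2 (strand under the band) -/
lemma sigma_braidS_comm_inner {n j l t : ℕ} (hj : 1 ≤ j) (h1 : j + 1 ≤ t)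
    (h2 : t + 2 ≤ l) (hl : l ≤ n) :
    Commute (braidSigma n t) (braidS n j l) := by
  rw [braidS_eq]
  set A := braidDesc n (j+1) (l-j-1) with hA
  have hshift : braidSigma n t * A = A * braidSigma n (t+1) := by
    rw [hA]
    exact sigma_desc_shift (j+1) (by omega) (l-j-1) t h1 (by omega) (by omega)
  have hcj : Commute (braidSigma n (t+1)) (braidSigma n j ^ 2) :=
    ((sigma_comm hj (by omega)).symm).pow_right 2
  show braidSigma n t * (A * braidSigma n j ^ 2 * A⁻¹) =
    (A * braidSigma n j ^ 2 * A⁻¹) * braidSigma n t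
  have hinv : braidSigma n (t+1) * A⁻¹ = A⁻¹ * braidSigma n t := by
    calc braidSigma n (t+1) * A⁻¹ = A⁻¹ * (A * braidSigma n (t+1)) * A⁻¹ := by group
      _ = A⁻¹ * (braidSigma n t * A) * A⁻¹ := by rw [← hshift]
      _ = A⁻¹ * braidSigma n t := by group
  calc braidSigma n t * (A * braidSigma n j ^ 2 * A⁻¹)
      = (braidSigma n t * A) * braidSigma n j ^ 2 * A⁻¹ := by group
    _ = A * (braidSigma n (t+1) * braidSigma n j ^ 2) * A⁻¹ := by rw [hshift]; group
    _ = A * braidSigma n j ^ 2 * (braidSigma n (t+1) * A⁻¹) := by rw [hcj.eq]; group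
    _ = A * braidSigma n j ^ 2 * A⁻¹ * braidSigma n t := by rw [hinv]; group

/-- σ_t commutes with s_{j,l} for t ≤ j-2 -/
lemma sigma_braidS_comm_below {n j l t : ℕ} (ht : 1 ≤ t) (h2 : t + 2 ≤ j) :
    Commute (braidSigma n t) (braidS n j l) := by
  rw [braidS_eq]
  have hA : Commute (braidSigma n t) (braidDesc n (j+1) (l-j-1)) :=
    sigma_desc_comm (Or.inr ⟨ht, by omega⟩)
  exact (hA.mul_right ((sigma_comm ht h2).pow_right 2)).mul_right hA.inv_right

/-- desc commutes with x if every letter does -/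
lemma desc_comm {n a m : ℕ} {x : BraidGroup n}
    (h : ∀ t, a ≤ t → t < a + m → Commute (braidSigma n t) x) :
    Commute (braidDesc n a m) x := by
  induction m with
  | zero => exact Commute.one_left _
  | succ m ih =>
    exact (h (a+m) (by omega) (by omega)).mul_left (ih (fun t h1 h2 => h t h1 (by omega)))

lemma braidS_comm_of_letters {n i k : ℕ} {x : BraidGroup n} (hik : i < k)
    (h : ∀ t, i ≤ t → t < k → Commute (braidSigma n t) x) :
    Commute (braidS n i k) x := by
  rw [braidS_eq]
  have hA : Commute (braidDesc n (i+1) (k-i-1)) x :=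
    desc_comm (fun t h1 h2 => h t (by omega) (by omega))
  exact (hA.mul_left ((h i (by omega) hik).pow_left 2)).mul_left hA.inv_left


/-- Artin–Markov relation (13): for `δ, ε = ±1` and indices with
`1 ≤ j < i < k < l ≤ n` or `1 ≤ i < k < j < l ≤ n`,
the elements `s_{i,k}^δ` and `s_{j,l}^ε` commute in `B_n`. -/
theorem braid_s_s_comm (n : ℕ) (hn : 2 ≤ n) (δ ε : ℤ)
    (hδ : δ = 1 ∨ δ = -1) (hε : ε = 1 ∨ ε = -1) (i j k l : ℕ)
    (hord : (1 ≤ j ∧ j < i ∧ i < k ∧ k < l ∧ l ≤ n) ∨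
            (1 ≤ i ∧ i < k ∧ k < j ∧ j < l ∧ l ≤ n)) :
    braidS n i k ^ δ * braidS n j l ^ ε = braidS n j l ^ ε * braidS n i k ^ δ := by
  have hcomm : Commute (braidS n i k) (braidS n j l) := by
    rcases hord with ⟨h1, h2, h3, h4, h5⟩ | ⟨h1, h2, h3, h4, h5⟩
    · exact braidS_comm_of_letters h3 (fun t ht1 ht2 =>
        sigma_braidS_comm_inner h1 (by omega) (by omega) h5)
    · exact braidS_comm_of_letters h2 (fun t ht1 ht2 =>
        sigma_braidS_comm_below (by omega) (by omega))
  exact (hcomm.zpow_zpow δ ε).eq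
end

section
/- (Composition–Diamond Lemma) Let k be a field, X a set, < a monomial well-order on the free monoid X*, and S a set of monic elements of the free associative algebra k⟨X⟩. Then S is a Gröbner–Shirshov basis with respect to < (i.e., every intersection composition and every inclusion composition of pairs of elements of S is trivial modulo (S,w)) if and only if the image of Irr(S) = {u ∈ X* : u cannot be written as a s̄ b with s ∈ S and a, b ∈ X*} in the quotient algebra k⟨X⟩/Id(S) is a k-linear basis of k⟨X⟩/Id(S). -/
variable {k : Type*} [Field k] {X : Type*} [LinearOrder (FreeMonoid X)]

/-- The leading word `f̄` of `f ∈ k⟨X⟩`: the largest word in the support of `f`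
(with junk value `1` for `f = 0`). -/
noncomputable def leadWord (f : MonoidAlgebra k (FreeMonoid X)) : FreeMonoid X :=
  if h : (Finsupp.support f.coeff).Nonempty then (Finsupp.support f.coeff).max' h else 1

/-- `f` is monic: the coefficient of its leading word is `1`. -/
def IsMonic (f : MonoidAlgebra k (FreeMonoid X)) : Prop :=
  f.coeff (leadWord f) = 1

/-- An element `h` is trivial modulo `(S, w)`: `h = Σ αᵢ aᵢ sᵢ bᵢ` with `αᵢ ∈ k`,
`aᵢ, bᵢ ∈ X*`, `sᵢ ∈ S` and `aᵢ s̄ᵢ bᵢ < w`. -/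
def TrivialMod (S : Set (MonoidAlgebra k (FreeMonoid X))) (w : FreeMonoid X)
    (h : MonoidAlgebra k (FreeMonoid X)) : Prop :=
  h ∈ Submodule.span k
    {x : MonoidAlgebra k (FreeMonoid X) |
      ∃ a b : FreeMonoid X, ∃ s ∈ S,
        x = MonoidAlgebra.of k (FreeMonoid X) a * s * MonoidAlgebra.of k (FreeMonoid X) b ∧
          a * leadWord s * b < w}

/-- `S` is a Gröbner–Shirshov basis: every intersection composition and every inclusion
composition of pairs of elements of `S` is trivial modulo `(S, w)`. -/
def IsGroebnerShirshovBasis (S : Set (MonoidAlgebra k (FreeMonoid X))) : Prop :=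
  (∀ f ∈ S, ∀ g ∈ S, ∀ a b w : FreeMonoid X,
      w = leadWord f * b → w = a * leadWord g →
      w.length < (leadWord f).length + (leadWord g).length →
      TrivialMod S w
        (f * MonoidAlgebra.of k (FreeMonoid X) b - MonoidAlgebra.of k (FreeMonoid X) a * g)) ∧
  (∀ f ∈ S, ∀ g ∈ S, ∀ a b : FreeMonoid X,
      leadWord f = a * leadWord g * b →
      TrivialMod S (leadWord f)
        (f - MonoidAlgebra.of k (FreeMonoid X) a * g * MonoidAlgebra.of k (FreeMonoid X) b))

/-- `Irr(S)`: the words that contain no leading word of an element of `S` as a subword. -/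
def IrrSet (S : Set (MonoidAlgebra k (FreeMonoid X))) : Set (FreeMonoid X) :=
  {u : FreeMonoid X | ¬ ∃ s ∈ S, ∃ a b : FreeMonoid X, u = a * leadWord s * b}

/-- The two-sided ideal `Id(S)` of `k⟨X⟩` generated by `S`, as a `k`-submodule. -/
noncomputable def idealOfSet (S : Set (MonoidAlgebra k (FreeMonoid X))) :
    Submodule k (MonoidAlgebra k (FreeMonoid X)) :=
  Submodule.span k
    {x : MonoidAlgebra k (FreeMonoid X) |
      ∃ a b : MonoidAlgebra k (FreeMonoid X), ∃ s ∈ S, x = a * s * b}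

/-!
Reducing leading words against `S` shows that `Irr(S)` always spans `k⟨X⟩` modulo `Id(S)`; since
words are linearly independent in `k⟨X⟩`, the basis property is therefore equivalent to
`k Irr(S) ∩ Id(S) = 0`, i.e. to every nonzero element of `Id(S)` having a leading word of the
form `a s̄ b`.

If `S` is a Gröbner–Shirshov basis, two products `a₁ s₁ b₁`, `a₂ s₂ b₂` with the same leading word
`w` differ by an element trivial modulo `(S, w)`: according to how the occurrences of `s̄₁` and
`s̄₂` in `w` meet, this is an intersection composition, an inclusion composition, or (for
disjoint occurrences) automatic. So in a sum `Σ αᵢ aᵢ sᵢ bᵢ` all terms with the maximal word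
`aᵢ s̄ᵢ bᵢ` can be merged into one, which either survives as the leading term or cancels and
leaves a sum with a smaller maximal word; well-founded induction finishes. Conversely, a
composition relative to `w` lies in `Id(S)` and only involves words below `w`, and reducing it
leaves a remainder in `k Irr(S) ∩ Id(S) = 0`.
-/

open MonoidAlgebra Submodule

local notation "k⟨X⟩" => MonoidAlgebra k (FreeMonoid X)

attribute [local instance] mulLeftMono_of_mulLeftStrictMono mulRightMono_of_mulRightStrictMono

namespace FreeMonoid

theorem exists_eq_mul_of_mul_eq_mul {α : Type*} {x y p q : FreeMonoid α} (h : x * p = y * q)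
    (hl : x.length ≤ y.length) : ∃ t, y = x * t ∧ p = t * q := by
  rcases List.append_eq_append_iff.1 (congrArg toList h) with ⟨t, hy, hp⟩ | ⟨t, hx, hq⟩
  · exact ⟨ofList t, toList.injective hy, toList.injective hp⟩
  · obtain rfl : t = [] := List.eq_nil_of_length_eq_zero <| by
      have := congrArg List.length hx
      simp only [List.length_append] at this
      change (toList x).length ≤ (toList y).length at hl
      omega
    simp only [List.append_nil, List.nil_append] at hx hq
    exact ⟨1, by rw [mul_one, toList.injective hx], by rw [one_mul, toList.injective hq]⟩

/-- How two occurrences `a₁ u₁ b₁ = a₂ u₂ b₂` of subwords can sit in a word, the left one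
starting first: disjoint, the second inside the first, or properly overlapping. -/
theorem overlap_cases {α : Type*} {a₁ u₁ b₁ a₂ u₂ b₂ : FreeMonoid α}
    (h : a₁ * u₁ * b₁ = a₂ * u₂ * b₂) (hl : a₁.length ≤ a₂.length) :
    ∃ t, a₂ = a₁ * t ∧
      ((∃ c, t = u₁ * c ∧ b₁ = c * u₂ * b₂) ∨
        (∃ d, u₁ = t * u₂ * d ∧ b₂ = d * b₁) ∨
        (∃ q, u₁ * q = t * u₂ ∧ b₁ = q * b₂ ∧ (u₁ * q).length < u₁.length + u₂.length)) := by
  obtain ⟨t, rfl, h₁⟩ := exists_eq_mul_of_mul_eq_mul (by simpa only [mul_assoc] using h) hl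
  refine ⟨t, rfl, ?_⟩
  rcases le_or_gt u₁.length t.length with h₂ | h₂
  · obtain ⟨c, rfl, rfl⟩ := exists_eq_mul_of_mul_eq_mul h₁ h₂
    exact Or.inl ⟨c, rfl, by rw [mul_assoc]⟩
  obtain ⟨r, rfl, h₃⟩ := exists_eq_mul_of_mul_eq_mul h₁.symm h₂.le
  rcases le_or_gt u₂.length r.length with h₄ | h₄
  · obtain ⟨d, rfl, rfl⟩ := exists_eq_mul_of_mul_eq_mul h₃ h₄
    exact Or.inr (Or.inl ⟨d, by rw [mul_assoc], rfl⟩)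
  · obtain ⟨q, rfl, rfl⟩ := exists_eq_mul_of_mul_eq_mul h₃.symm h₄.le
    refine Or.inr (Or.inr ⟨q, by simp only [mul_assoc], rfl, ?_⟩)
    simp only [length_mul] at h₂ ⊢
    omega

end FreeMonoid

theorem leadWord_mem_support {f : k⟨X⟩} (hf : f ≠ 0) : leadWord f ∈ f.coeff.support := by
  rw [leadWord, dif_pos (Finsupp.support_nonempty_iff.2 (by simpa using hf))]
  exact Finset.max'_mem _ _

theorem le_leadWord {f : k⟨X⟩} {u : FreeMonoid X} (hu : u ∈ f.coeff.support) : u ≤ leadWord f := by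
  rw [leadWord, dif_pos ⟨u, hu⟩]
  exact Finset.le_max' _ _ hu

theorem mem_supported_Iic_leadWord (f : k⟨X⟩) : f ∈ supported k k (Set.Iic (leadWord f)) :=
  fun _ hu => le_leadWord hu

theorem leadWord_eq_of_mem_supported {f : k⟨X⟩} {w : FreeMonoid X}
    (hf : f ∈ supported k k (Set.Iic w)) (hw : f.coeff w ≠ 0) : leadWord f = w := by
  have hf0 : f ≠ 0 := by rintro rfl; simp at hw
  exact le_antisymm (hf (leadWord_mem_support hf0)) (le_leadWord (Finsupp.mem_support_iff.2 hw))

theorem leadWord_lt_of_mem_supported {f : k⟨X⟩} {w : FreeMonoid X}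
    (hf : f ∈ supported k k (Set.Iio w)) (h0 : f ≠ 0) : leadWord f < w :=
  hf (leadWord_mem_support h0)

theorem sub_mem_supported_Iio {f g : k⟨X⟩} {w : FreeMonoid X}
    (hf : f ∈ supported k k (Set.Iic w)) (hg : g ∈ supported k k (Set.Iic w))
    (h : f.coeff w = g.coeff w) : f - g ∈ supported k k (Set.Iio w) := by
  rw [mem_supported'] at hf hg ⊢
  intro u hu
  rcases (not_lt.1 hu).eq_or_lt with rfl | hwu
  · simp [h]
  · simp [hf u (not_le.2 hwu), hg u (not_le.2 hwu)]

theorem sub_of_leadWord_mem_supported {s : k⟨X⟩} (hs : IsMonic s) :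
    s - of k _ (leadWord s) ∈ supported k k (Set.Iio (leadWord s)) :=
  sub_mem_supported_Iio (mem_supported_Iic_leadWord s)
    (by simp [of_apply, mem_supported]) (by simpa [of_apply, IsMonic] using hs)

theorem coeff_sandwich {α : Type*} (f : MonoidAlgebra k (FreeMonoid α)) (a u b : FreeMonoid α) :
    (of k _ a * f * of k _ b).coeff (a * u * b) = f.coeff u := by
  simp [of_apply]

theorem sandwich_mem_supported [MulLeftStrictMono (FreeMonoid X)]
    [MulRightStrictMono (FreeMonoid X)] (f : k⟨X⟩) (a b : FreeMonoid X) :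
    of k _ a * f * of k _ b ∈ supported k k (Set.Iic (a * leadWord f * b)) := by
  classical
  intro m hm
  obtain ⟨m', hm', rfl⟩ := Finset.mem_image.1 (support_coeff_mul_single_subset _ _ _ hm)
  obtain ⟨u, hu, rfl⟩ := Finset.mem_image.1 (support_coeff_single_mul_subset _ _ _ hm')
  exact mul_le_mul_left (mul_le_mul_right (le_leadWord hu) a) b

/-- `TrivialMod S w h` means `h ∈ reductionSpan S (· < w)`, and `Id(S) = reductionSpan S ⊤`. -/
noncomputable def reductionSpan (S : Set k⟨X⟩) (P : FreeMonoid X → Prop) : Submodule k k⟨X⟩ :=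
  span k {x | ∃ a b : FreeMonoid X, ∃ s ∈ S,
    x = of k _ a * s * of k _ b ∧ P (a * leadWord s * b)}

section ReductionSpan

variable {S : Set (MonoidAlgebra k (FreeMonoid X))}

theorem sandwich_mem_reductionSpan {P : FreeMonoid X → Prop} {s : k⟨X⟩} (hs : s ∈ S)
    {a b : FreeMonoid X} (h : P (a * leadWord s * b)) :
    of k _ a * s * of k _ b ∈ reductionSpan S P :=
  subset_span ⟨a, b, s, hs, rfl, h⟩

theorem reductionSpan_mono {P Q : FreeMonoid X → Prop} (h : ∀ w, P w → Q w) :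
    reductionSpan S P ≤ reductionSpan S Q :=
  span_mono fun _ ⟨a, b, s, hs, hx, hP⟩ => ⟨a, b, s, hs, hx, h _ hP⟩

theorem reductionSpan_le_idealOfSet (P : FreeMonoid X → Prop) :
    reductionSpan S P ≤ idealOfSet S :=
  span_mono fun _ ⟨a, b, s, hs, hx, _⟩ => ⟨of k _ a, of k _ b, s, hs, hx⟩

theorem idealOfSet_le_reductionSpan : idealOfSet S ≤ reductionSpan S fun _ => True := by
  refine span_le.2 ?_
  rintro _ ⟨a, b, s, hs, rfl⟩
  induction a using MonoidAlgebra.induction_on with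
  | of u =>
    induction b using MonoidAlgebra.induction_on with
    | of v => exact sandwich_mem_reductionSpan hs trivial
    | add b b' hb hb' => rw [mul_add]; exact add_mem hb hb'
    | smul r b hb => rw [mul_smul_comm]; exact smul_mem _ r hb
  | add a a' ha ha' => rw [add_mul, add_mul]; exact add_mem ha ha'
  | smul r a ha => rw [smul_mul_assoc, smul_mul_assoc]; exact smul_mem _ r ha

theorem eq_zero_or_exists_mem_reductionSpan_le {P : FreeMonoid X → Prop} {f : k⟨X⟩}
    (hf : f ∈ reductionSpan S P) : f = 0 ∨ ∃ w, P w ∧ f ∈ reductionSpan S (· ≤ w) := by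
  induction hf using span_induction with
  | mem x hx =>
    obtain ⟨a, b, s, hs, rfl, hP⟩ := hx
    exact Or.inr ⟨_, hP, sandwich_mem_reductionSpan hs le_rfl⟩
  | zero => exact Or.inl rfl
  | add x y _ _ hx hy =>
    rcases hx with rfl | ⟨v, hv, hx⟩
    · simpa using hy
    rcases hy with rfl | ⟨w, hw, hy⟩
    · simpa using Or.inr ⟨v, hv, hx⟩
    rcases le_total v w with hvw | hwv
    · exact Or.inr ⟨w, hw, add_mem (reductionSpan_mono (fun _ h => h.trans hvw) hx) hy⟩
    · exact Or.inr ⟨v, hv, add_mem hx (reductionSpan_mono (fun _ h => h.trans hwv) hy)⟩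
  | smul r x _ hx =>
    rcases hx with rfl | ⟨v, hv, hx⟩
    · exact Or.inl (smul_zero r)
    · exact Or.inr ⟨v, hv, smul_mem _ r hx⟩

theorem mul_of_mul_mem_reductionSpan_left [MulRightStrictMono (FreeMonoid X)] {x : k⟨X⟩}
    {u : FreeMonoid X} (hx : x ∈ supported k k (Set.Iio u)) {s : k⟨X⟩} (hs : s ∈ S)
    (c : FreeMonoid X) :
    x * of k _ c * s ∈ reductionSpan S (· < u * c * leadWord s) := by
  rw [supported_eq_span_single] at hx
  induction hx using span_induction with
  | mem y hy =>
    obtain ⟨v, hv, rfl⟩ := hy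
    have hlt : v * c * leadWord s * 1 < u * c * leadWord s := by
      rw [mul_one]
      gcongr
      exact hv
    have := sandwich_mem_reductionSpan (P := (· < u * c * leadWord s)) hs hlt
    rwa [map_mul, map_one, mul_one] at this
  | zero => simp
  | add y z _ _ hy hz => rw [add_mul, add_mul]; exact add_mem hy hz
  | smul r y _ hy => rw [smul_mul_assoc, smul_mul_assoc]; exact smul_mem _ r hy

theorem mul_of_mul_mem_reductionSpan_right [MulLeftStrictMono (FreeMonoid X)] {s : k⟨X⟩}
    (hs : s ∈ S) (c : FreeMonoid X) {x : k⟨X⟩} {u : FreeMonoid X}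
    (hx : x ∈ supported k k (Set.Iio u)) :
    s * of k _ c * x ∈ reductionSpan S (· < leadWord s * c * u) := by
  rw [supported_eq_span_single] at hx
  induction hx using span_induction with
  | mem y hy =>
    obtain ⟨v, hv, rfl⟩ := hy
    have hlt : 1 * leadWord s * (c * v) < leadWord s * c * u := by
      rw [one_mul, ← mul_assoc]
      gcongr
      exact hv
    have := sandwich_mem_reductionSpan (P := (· < leadWord s * c * u)) hs hlt
    rwa [map_mul, map_one, one_mul, ← mul_assoc] at this
  | zero => simp
  | add y z _ _ hy hz => rw [mul_add]; exact add_mem hy hz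
  | smul r y _ hy => rw [mul_smul_comm]; exact smul_mem _ r hy

variable [MulLeftStrictMono (FreeMonoid X)] [MulRightStrictMono (FreeMonoid X)]

theorem reductionSpan_le_supported {P : FreeMonoid X → Prop} (hP : ∀ u v, u ≤ v → P v → P u) :
    reductionSpan S P ≤ supported k k {u | P u} := by
  refine span_le.2 ?_
  rintro _ ⟨a, b, s, hs, rfl, hk⟩
  exact supported_mono (fun u hu => hP _ _ hu hk) (sandwich_mem_supported s a b)

theorem sandwich_mem_reductionSpan_lt {h : k⟨X⟩} {w : FreeMonoid X}
    (hh : h ∈ reductionSpan S (· < w)) (a b : FreeMonoid X) :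
    of k _ a * h * of k _ b ∈ reductionSpan S (· < a * w * b) := by
  induction hh using span_induction with
  | mem x hx =>
    obtain ⟨a', b', s, hs, rfl, hk⟩ := hx
    have hlt : a * (a' * leadWord s * b') * b < a * w * b := by gcongr
    have := sandwich_mem_reductionSpan (P := (· < a * w * b)) hs (a := a * a') (b := b' * b)
      (by simpa only [mul_assoc] using hlt)
    simpa only [map_mul, mul_assoc] using this
  | zero => simp
  | add x y _ _ hx hy => rw [mul_add, add_mul]; exact add_mem hx hy
  | smul r x _ hx => rw [mul_smul_comm, smul_mul_assoc]; exact smul_mem _ r hx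

end ReductionSpan

section Diamond

variable {S : Set (MonoidAlgebra k (FreeMonoid X))}
  [MulLeftStrictMono (FreeMonoid X)] [MulRightStrictMono (FreeMonoid X)]

theorem disjoint_composition_mem_reductionSpan {s₁ s₂ : k⟨X⟩} (h₁ : s₁ ∈ S) (h₂ : s₂ ∈ S)
    (m₁ : IsMonic s₁) (m₂ : IsMonic s₂) (c : FreeMonoid X) :
    s₁ * of k _ c * of k _ (leadWord s₂) - of k _ (leadWord s₁) * of k _ c * s₂ ∈
      reductionSpan S (· < leadWord s₁ * c * leadWord s₂) := by
  have e : s₁ * of k _ c * of k _ (leadWord s₂) - of k _ (leadWord s₁) * of k _ c * s₂ =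
      (s₁ - of k _ (leadWord s₁)) * of k _ c * s₂ -
        s₁ * of k _ c * (s₂ - of k _ (leadWord s₂)) := by
    noncomm_ring
  rw [e]
  exact sub_mem (mul_of_mul_mem_reductionSpan_left (sub_of_leadWord_mem_supported m₁) h₂ c)
    (mul_of_mul_mem_reductionSpan_right h₁ c (sub_of_leadWord_mem_supported m₂))

theorem sandwich_sub_sandwich_mem_reductionSpan (hgsb : IsGroebnerShirshovBasis S)
    (hS : ∀ s ∈ S, IsMonic s) {s₁ s₂ : k⟨X⟩} (h₁ : s₁ ∈ S) (h₂ : s₂ ∈ S)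
    {a₁ b₁ a₂ b₂ : FreeMonoid X} (h : a₁ * leadWord s₁ * b₁ = a₂ * leadWord s₂ * b₂) :
    of k _ a₁ * s₁ * of k _ b₁ - of k _ a₂ * s₂ * of k _ b₂ ∈
      reductionSpan S (· < a₁ * leadWord s₁ * b₁) := by
  wlog hl : a₁.length ≤ a₂.length generalizing s₁ s₂ a₁ b₁ a₂ b₂
  · rw [h, ← neg_sub]
    exact neg_mem (this h₂ h₁ h.symm (le_of_not_ge hl))
  obtain ⟨t, rfl, ⟨c, rfl, rfl⟩ | ⟨d, hd, rfl⟩ | ⟨q, hq, rfl, hlen⟩⟩ :=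
    FreeMonoid.overlap_cases h hl
  · convert sandwich_mem_reductionSpan_lt
      (disjoint_composition_mem_reductionSpan h₁ h₂ (hS _ h₁) (hS _ h₂) c) a₁ b₂ using 2
    · simp only [mul_assoc]
    · simp only [map_mul]; noncomm_ring
  · convert sandwich_mem_reductionSpan_lt (hgsb.2 s₁ h₁ s₂ h₂ t d hd) a₁ b₁ using 1
    simp only [map_mul]; noncomm_ring
  · convert sandwich_mem_reductionSpan_lt (hgsb.1 s₁ h₁ s₂ h₂ t q _ rfl hq hlen) a₁ b₂ using 2
    · simp only [mul_assoc]
    · simp only [map_mul]; noncomm_ring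

theorem mem_reductionSpan_lt_or_leadWord_eq (hgsb : IsGroebnerShirshovBasis S)
    (hS : ∀ s ∈ S, IsMonic s) {f : k⟨X⟩} {w : FreeMonoid X}
    (hf : f ∈ reductionSpan S (· ≤ w)) :
    f ∈ reductionSpan S (· < w) ∨ (leadWord f = w ∧ w ∉ IrrSet S) := by
  by_cases hw : w ∈ IrrSet S
  · refine Or.inl (span_mono ?_ hf)
    rintro _ ⟨a, b, s, hs, rfl, hk⟩
    exact ⟨a, b, s, hs, rfl, hk.lt_of_ne fun h => hw ⟨s, hs, a, b, h.symm⟩⟩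
  obtain ⟨s₀, hs₀, a₀, b₀, rfl⟩ := not_not.1 hw
  set p₀ := of k _ a₀ * s₀ * of k _ b₀
  have hsplit : reductionSpan S (· ≤ a₀ * leadWord s₀ * b₀) ≤
      reductionSpan S (· < a₀ * leadWord s₀ * b₀) ⊔ k ∙ p₀ := by
    refine span_le.2 ?_
    rintro _ ⟨a, b, s, hs, rfl, hk⟩
    rcases hk.lt_or_eq with hlt | heq
    · exact mem_sup_left (sandwich_mem_reductionSpan hs hlt)
    · rw [← sub_sub_cancel p₀ (of k _ a * s * of k _ b)]
      exact sub_mem (mem_sup_right (mem_span_singleton_self _))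
        (mem_sup_left (sandwich_sub_sandwich_mem_reductionSpan hgsb hS hs₀ hs heq.symm))
  obtain ⟨g, hg, _, hp, rfl⟩ := mem_sup.1 (hsplit hf)
  obtain ⟨c, rfl⟩ := mem_span_singleton.1 hp
  by_cases hc : c = 0
  · left
    simpa [hc] using hg
  refine Or.inr ⟨leadWord_eq_of_mem_supported
    (reductionSpan_le_supported (fun _ _ => le_trans) hf) ?_, hw⟩
  have hg0 : g.coeff (a₀ * leadWord s₀ * b₀) = 0 :=
    (mem_supported'.1 (reductionSpan_le_supported (fun _ _ => lt_of_le_of_lt) hg)) _ (lt_irrefl _)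
  have hp₀ : p₀.coeff (a₀ * leadWord s₀ * b₀) = 1 := by
    rw [coeff_sandwich]; exact hS s₀ hs₀
  simp [hg0, hp₀, hc]

theorem leadWord_not_mem_irrSet_of_mem_reductionSpan [WellFoundedLT (FreeMonoid X)]
    (hgsb : IsGroebnerShirshovBasis S) (hS : ∀ s ∈ S, IsMonic s) (w : FreeMonoid X) {f : k⟨X⟩}
    (hf : f ∈ reductionSpan S (· ≤ w)) (h0 : f ≠ 0) : leadWord f ∉ IrrSet S := by
  induction w using WellFoundedLT.induction generalizing f with
  | ind w ih =>
  rcases mem_reductionSpan_lt_or_leadWord_eq hgsb hS hf with hlt | ⟨rfl, hw⟩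
  · obtain h | ⟨w', hw', hf'⟩ := eq_zero_or_exists_mem_reductionSpan_le hlt
    · exact absurd h h0
    · exact ih w' hw' hf' h0
  · exact hw

theorem disjoint_supported_irrSet_idealOfSet [WellFoundedLT (FreeMonoid X)]
    (hgsb : IsGroebnerShirshovBasis S) (hS : ∀ s ∈ S, IsMonic s) :
    Disjoint (supported k k (IrrSet S)) (idealOfSet S) := by
  refine disjoint_def.2 fun f hirr hI => by_contra fun h0 => ?_
  obtain h | ⟨w, -, hw⟩ := eq_zero_or_exists_mem_reductionSpan_le (idealOfSet_le_reductionSpan hI)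
  · exact h0 h
  · exact leadWord_not_mem_irrSet_of_mem_reductionSpan hgsb hS w hw h0
      (hirr (leadWord_mem_support h0))

theorem mem_supported_irrSet_sup_reductionSpan [WellFoundedLT (FreeMonoid X)]
    (hS : ∀ s ∈ S, IsMonic s) (w : FreeMonoid X) {f : k⟨X⟩}
    (hf : f ∈ supported k k (Set.Iic w)) :
    f ∈ supported k k (IrrSet S) ⊔ reductionSpan S (· ≤ w) := by
  induction w using WellFoundedLT.induction generalizing f with
  | ind w ih =>
  obtain ⟨p, hp, hpw, hp1⟩ : ∃ p ∈ supported k k (IrrSet S) ⊔ reductionSpan S (· ≤ w),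
      p ∈ supported k k (Set.Iic w) ∧ p.coeff w = 1 := by
    by_cases hw : w ∈ IrrSet S
    · refine ⟨of k _ w, mem_sup_left ?_, ?_, by simp [of_apply]⟩ <;>
        simp [of_apply, mem_supported, hw]
    · obtain ⟨s, hs, a, b, rfl⟩ := not_not.1 hw
      exact ⟨_, mem_sup_right (sandwich_mem_reductionSpan hs le_rfl),
        sandwich_mem_supported s a b, by rw [coeff_sandwich]; exact hS s hs⟩
  have hlt : f - f.coeff w • p ∈ supported k k (Set.Iio w) :=
    sub_mem_supported_Iio hf (smul_mem _ _ hpw) (by simp [hp1])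
  have hrest : f - f.coeff w • p ∈ supported k k (IrrSet S) ⊔ reductionSpan S (· ≤ w) := by
    by_cases h0 : f - f.coeff w • p = 0
    · rw [h0]; exact zero_mem _
    have hw' := leadWord_lt_of_mem_supported hlt h0
    have hle : reductionSpan S (· ≤ leadWord (f - f.coeff w • p)) ≤ reductionSpan S (· ≤ w) :=
      reductionSpan_mono fun _ h => h.trans hw'.le
    exact sup_le_sup_left hle _ (ih _ hw' (mem_supported_Iic_leadWord _))
  simpa using add_mem hrest (smul_mem _ (f.coeff w) hp)

theorem supported_irrSet_sup_idealOfSet [WellFoundedLT (FreeMonoid X)]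
    (hS : ∀ s ∈ S, IsMonic s) : supported k k (IrrSet S) ⊔ idealOfSet S = ⊤ :=
  eq_top_iff.2 fun f _ => sup_le_sup_left (reductionSpan_le_idealOfSet (S := S) _) _
    (mem_supported_irrSet_sup_reductionSpan hS _ (mem_supported_Iic_leadWord f))

theorem trivialMod_of_mem_idealOfSet [WellFoundedLT (FreeMonoid X)] (hS : ∀ s ∈ S, IsMonic s)
    (hdisj : Disjoint (supported k k (IrrSet S)) (idealOfSet S)) {h : k⟨X⟩} {w : FreeMonoid X}
    (hI : h ∈ idealOfSet S) (hw : h ∈ supported k k (Set.Iio w)) : TrivialMod S w h := by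
  show h ∈ reductionSpan S (· < w)
  by_cases h0 : h = 0
  · exact h0 ▸ zero_mem _
  obtain ⟨r, hr, t, ht, rfl⟩ :=
    mem_sup.1 (mem_supported_irrSet_sup_reductionSpan hS _ (mem_supported_Iic_leadWord h))
  obtain rfl : r = 0 := disjoint_def.1 hdisj r hr
    (by simpa using sub_mem hI (reductionSpan_le_idealOfSet _ ht))
  rw [zero_add] at hw h0 ht ⊢
  exact reductionSpan_mono (fun _ hv => hv.trans_lt (leadWord_lt_of_mem_supported hw h0)) ht

theorem isGroebnerShirshovBasis_of_disjoint [WellFoundedLT (FreeMonoid X)]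
    (hS : ∀ s ∈ S, IsMonic s) (hdisj : Disjoint (supported k k (IrrSet S)) (idealOfSet S)) :
    IsGroebnerShirshovBasis S := by
  have gen : ∀ s ∈ S, ∀ a b : FreeMonoid X, of k _ a * s * of k _ b ∈ idealOfSet S ∧
      of k _ a * s * of k _ b ∈ supported k k (Set.Iic (a * leadWord s * b)) ∧
      (of k _ a * s * of k _ b).coeff (a * leadWord s * b) = 1 := fun s hs a b =>
    ⟨reductionSpan_le_idealOfSet _ (sandwich_mem_reductionSpan (P := fun _ => True) hs trivial),
      sandwich_mem_supported s a b, by rw [coeff_sandwich]; exact hS s hs⟩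
  refine ⟨fun f hf g hg a b w hb ha _ => ?_, fun f hf g hg a b hab => ?_⟩
  · obtain ⟨hf₁, hf₂, hf₃⟩ := gen f hf 1 b
    obtain ⟨hg₁, hg₂, hg₃⟩ := gen g hg a 1
    simp only [map_one, one_mul, mul_one, ← hb, ← ha] at hf₁ hf₂ hf₃ hg₁ hg₂ hg₃
    exact trivialMod_of_mem_idealOfSet hS hdisj (sub_mem hf₁ hg₁)
      (sub_mem_supported_Iio hf₂ hg₂ (hf₃.trans hg₃.symm))
  · obtain ⟨hf₁, hf₂, hf₃⟩ := gen f hf 1 1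
    obtain ⟨hg₁, hg₂, hg₃⟩ := gen g hg a b
    simp only [map_one, one_mul, mul_one, ← hab] at hf₁ hf₂ hf₃ hg₁ hg₂ hg₃
    exact trivialMod_of_mem_idealOfSet hS hdisj (sub_mem hf₁ hg₁)
      (sub_mem_supported_Iio hf₂ hg₂ (hf₃.trans hg₃.symm))

end Diamond

/-- **Composition–Diamond Lemma.**  Let `k` be a field, `<` a monomial well-order on `X*`
and `S` a set of monic elements of `k⟨X⟩`.  Then `S` is a Gröbner–Shirshov basis if and only
if the image of `Irr(S)` in `k⟨X⟩/Id(S)` is a `k`-linear basis of `k⟨X⟩/Id(S)`. -/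
theorem composition_diamond_lemma [WellFoundedLT (FreeMonoid X)]
    (hmono : ∀ u v w₁ w₂ : FreeMonoid X, u < v → w₁ * u * w₂ < w₁ * v * w₂)
    (S : Set (MonoidAlgebra k (FreeMonoid X))) (hS : ∀ s ∈ S, IsMonic s) :
    IsGroebnerShirshovBasis S ↔
      (LinearIndependent k (fun u : IrrSet S =>
          Submodule.Quotient.mk (p := idealOfSet S)
            (MonoidAlgebra.of k (FreeMonoid X) (u : FreeMonoid X))) ∧
        Submodule.span k (Set.range (fun u : IrrSet S =>
          Submodule.Quotient.mk (p := idealOfSet S)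
            (MonoidAlgebra.of k (FreeMonoid X) (u : FreeMonoid X)))) = ⊤) := by
  have : MulLeftStrictMono (FreeMonoid X) := ⟨fun a _ _ h => by simpa using hmono _ _ a 1 h⟩
  have : MulRightStrictMono (FreeMonoid X) := ⟨fun b _ _ h => by simpa using hmono _ _ 1 b h⟩
  let v : IrrSet S → k⟨X⟩ := fun u => of k _ u
  have hv : LinearIndependent k v :=
    (MonoidAlgebra.basis _ k).linearIndependent.comp _ Subtype.val_injective
  have hspan : span k (Set.range v) = supported k k (IrrSet S) := by
    rw [supported_eq_span_single, Set.image_eq_range]; rfl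
  constructor
  · intro hgsb
    refine ⟨hv.map (f := (idealOfSet S).mkQ) ?_, ?_⟩
    · rw [hspan, ker_mkQ]
      exact disjoint_supported_irrSet_idealOfSet hgsb hS
    · have := (map_mkQ_eq_top (idealOfSet S) (supported k k (IrrSet S))).2
        (by rw [sup_comm]; exact supported_irrSet_sup_idealOfSet hS)
      rwa [← hspan, ← span_image, ← Set.range_comp] at this
  · rintro ⟨hli, -⟩
    have := range_ker_disjoint (f := (idealOfSet S).mkQ) (v := v) hli
    rw [hspan, ker_mkQ] at this
    exact isGroebnerShirshovBasis_of_disjoint hS this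
end

section
/- Let X = Y ⊔ Z, suppose the free monoid Y* carries a monomial order (a linear order such that u < v implies w₁ u w₂ < w₁ v w₂ for all w₁, w₂ ∈ Y*) and Z carries a linear order. Then the inverse tower order on X* — defined by writing each word uniquely as u = u_0 z_1 u_1 ⋯ z_k u_k with k ≥ 0, u_i ∈ Y*, z_i ∈ Z, assigning the inverse weight inwt(u) = (k, u_k, z_k, u_{k-1}, z_{k-1}, …, u_1, z_1, u_0), and setting u > v iff inwt(u) > inwt(v) lexicographically — is a monomial order on the free monoid X*: it is a linear order, and u > v implies w₁ u w₂ > w₁ v w₂ for all w₁, w₂ ∈ X*. -/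
variable {Y Z : Type*}

/-- Factor a word over `Y ⊕ Z` as `u₀ z₁ u₁ ⋯ z_k u_k` with `uᵢ ∈ Y*` and `zᵢ ∈ Z`:
the result is the pair `(u₀, [(z₁, u₁), …, (z_k, u_k)])`. -/
def towerDecomp : List (Y ⊕ Z) → FreeMonoid Y × List (Z × FreeMonoid Y)
  | [] => (1, [])
  | Sum.inl y :: rest =>
      (FreeMonoid.of y * (towerDecomp rest).1, (towerDecomp rest).2)
  | Sum.inr z :: rest =>
      (1, (z, (towerDecomp rest).1) :: (towerDecomp rest).2)

/-- Comparison of the blocks `(zᵢ, uᵢ)` occurring in the inverse weight: first by the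
`Y*`-component `uᵢ`, then by the `Z`-letter `zᵢ`. -/
def towerPairLt [LT (FreeMonoid Y)] [LT Z] (p q : Z × FreeMonoid Y) : Prop :=
  p.2 < q.2 ∨ (p.2 = q.2 ∧ p.1 < q.1)

/-- The inverse tower order on `(Y ⊕ Z)*`: writing `u = u₀ z₁ u₁ ⋯ z_k u_k`, words are
compared by their inverse weights `inwt u = (k, u_k, z_k, u_{k-1}, z_{k-1}, …, u₁, z₁, u₀)`
lexicographically. -/
def towerLt [LT (FreeMonoid Y)] [LT Z] (u v : FreeMonoid (Y ⊕ Z)) : Prop :=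
  (towerDecomp u.toList).2.length < (towerDecomp v.toList).2.length ∨
    ((towerDecomp u.toList).2.length = (towerDecomp v.toList).2.length ∧
      (List.Lex towerPairLt (towerDecomp u.toList).2.reverse (towerDecomp v.toList).2.reverse ∨
        ((towerDecomp u.toList).2 = (towerDecomp v.toList).2 ∧
          (towerDecomp u.toList).1 < (towerDecomp v.toList).1)))

/-!
The inverse weight is injective, since a word is recovered from its factorization, and
`towerLt` is the pullback along it of a lexicographic order; hence `towerLt` is a strict total
order. Multiplying by `w` on the right puts the blocks of `w` in front of the reversed block
list and multiplies `u_k` (or `u₀` if `k = 0`) by `w₀`; multiplying by `w` on the left puts them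
at the back and multiplies the last `Y*`-word of `w` by `u₀`. Either way the first position
where the inverse weights of `u` and `v` differ keeps its sign, by monomiality of `Y*`.
-/

open Function

instance List.Lex.isStrictTotalOrder {α : Type*} (r : α → α → Prop)
    [IsStrictTotalOrder α r] : IsStrictTotalOrder (List α) (List.Lex r) :=
  { isStrictWeakOrder_of_isOrderConnected with }

instance Prod.Lex.isStrictTotalOrder {α β : Type*} (r : α → α → Prop) (s : β → β → Prop)
    [IsStrictTotalOrder α r] [IsStrictTotalOrder β s] :
    IsStrictTotalOrder (α × β) (Prod.Lex r s) := {}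

theorem List.Lex.modifyHead {α : Type*} {r : α → α → Prop} {f : α → α}
    (hf : ∀ a b, r a b → r (f a) (f b)) :
    ∀ {l₁ l₂ : List α}, List.Lex r l₁ l₂ →
      List.Lex r (l₁.modifyHead f) (l₂.modifyHead f)
  | _, _, .nil => .nil
  | _, _, .cons h => .cons h
  | _, _, .rel h => .rel (hf _ _ h)

theorem List.Lex.append_of_length_eq {α : Type*} {r : α → α → Prop} {m₁ m₂ : List α} :
    ∀ {l₁ l₂ : List α}, List.Lex r l₁ l₂ → l₁.length = l₂.length →
      List.Lex r (l₁ ++ m₁) (l₂ ++ m₂)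
  | _, _, .nil, h => by simp at h
  | _, _, .rel h, _ => .rel h
  | _, _, .cons h, hlen => .cons (h.append_of_length_eq (by simpa using hlen))

lemma towerDecomp_append_fst_of_snd_eq_nil (a b : List (Y ⊕ Z))
    (h : (towerDecomp a).2 = []) :
    (towerDecomp (a ++ b)).1 = (towerDecomp a).1 * (towerDecomp b).1 := by
  induction a with
  | nil => exact (one_mul _).symm
  | cons x a ih =>
    rcases x with y | z
    · simp only [towerDecomp, List.cons_append] at h ⊢
      rw [ih h, mul_assoc]
    · simp [towerDecomp] at h

lemma towerDecomp_append_fst_of_snd_ne_nil (a b : List (Y ⊕ Z))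
    (h : (towerDecomp a).2 ≠ []) :
    (towerDecomp (a ++ b)).1 = (towerDecomp a).1 := by
  induction a with
  | nil => exact absurd rfl h
  | cons x a ih =>
    rcases x with y | z
    · simp only [towerDecomp, List.cons_append] at h ⊢
      rw [ih h]
    · rfl

/-- The last `Y*`-word of `a` absorbs the leading `Y*`-word of `b`. -/
lemma towerDecomp_append_snd_reverse (a b : List (Y ⊕ Z)) :
    (towerDecomp (a ++ b)).2.reverse = (towerDecomp b).2.reverse ++
      (towerDecomp a).2.reverse.modifyHead (Prod.map id (· * (towerDecomp b).1)) := by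
  induction a with
  | nil => simp [towerDecomp]
  | cons x a ih =>
    rcases x with y | z
    · simpa [towerDecomp] using ih
    · simp only [towerDecomp, List.cons_append, List.reverse_cons, ih, List.append_assoc]
      congr 1
      rcases eq_or_ne (towerDecomp a).2 [] with h | h
      · rw [towerDecomp_append_fst_of_snd_eq_nil a b h, h]
        rfl
      · obtain ⟨p, T, hpT⟩ := List.exists_cons_of_ne_nil (List.reverse_ne_nil_iff.mpr h)
        rw [towerDecomp_append_fst_of_snd_ne_nil a b h, hpT]
        rfl

lemma towerDecomp_append_snd_length (a b : List (Y ⊕ Z)) :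
    (towerDecomp (a ++ b)).2.length = (towerDecomp a).2.length + (towerDecomp b).2.length := by
  simpa [add_comm] using congrArg List.length (towerDecomp_append_snd_reverse a b)

def towerCompose (d : FreeMonoid Y × List (Z × FreeMonoid Y)) : List (Y ⊕ Z) :=
  d.1.toList.map Sum.inl ++ d.2.flatMap fun p => Sum.inr p.1 :: p.2.toList.map Sum.inl

lemma towerCompose_towerDecomp :
    LeftInverse (towerCompose (Y := Y) (Z := Z)) towerDecomp := by
  intro l
  induction l with
  | nil => rfl
  | cons x l ih => rcases x with y | z <;> simpa [towerDecomp, towerCompose] using ih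

/-- The inverse weight `(k, u_k, z_k, …, u₁, z₁, u₀)`, stored as
`(k, [(z_k, u_k), …, (z₁, u₁)], u₀)`. -/
def inverseWeight (u : FreeMonoid (Y ⊕ Z)) : ℕ × List (Z × FreeMonoid Y) × FreeMonoid Y :=
  ((towerDecomp u.toList).2.length, (towerDecomp u.toList).2.reverse, (towerDecomp u.toList).1)

lemma inverseWeight_injective : Injective (inverseWeight (Y := Y) (Z := Z)) := by
  intro u v h
  simp only [inverseWeight, Prod.ext_iff, List.reverse_inj] at h
  exact FreeMonoid.toList.injective <|
    towerCompose_towerDecomp.injective (Prod.ext h.2.2 h.2.1)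

lemma towerPairLt_eq_onFun_swap [LT (FreeMonoid Y)] [LT Z] :
    towerPairLt (Y := Y) (Z := Z) = onFun (Prod.Lex (· < ·) (· < ·)) Prod.swap := by
  ext p q
  simp [towerPairLt, onFun, Prod.lex_def]

lemma towerLt_eq_onFun_inverseWeight [LT (FreeMonoid Y)] [LT Z] :
    towerLt (Y := Y) (Z := Z) =
      onFun (Prod.Lex (· < ·) (Prod.Lex (List.Lex towerPairLt) (· < ·))) inverseWeight := by
  ext u v
  simp [towerLt, onFun, inverseWeight, Prod.lex_def]

instance towerPairLt_isStrictTotalOrder [LinearOrder (FreeMonoid Y)] [LinearOrder Z] :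
    IsStrictTotalOrder (Z × FreeMonoid Y) towerPairLt := by
  rw [towerPairLt_eq_onFun_swap]
  exact Prod.swap_injective.isStrictTotalOrder_onFun _

lemma towerLt_isStrictTotalOrder [LinearOrder (FreeMonoid Y)] [LinearOrder Z] :
    IsStrictTotalOrder (FreeMonoid (Y ⊕ Z)) towerLt := by
  rw [towerLt_eq_onFun_inverseWeight]
  exact inverseWeight_injective.isStrictTotalOrder_onFun _

section Compatibility

variable [LinearOrder (FreeMonoid Y)] [LinearOrder Z] {u v : FreeMonoid (Y ⊕ Z)}

lemma towerLt_mul_right (hY : ∀ a b c : FreeMonoid Y, a < b → a * c < b * c)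
    (h : towerLt u v) (w : FreeMonoid (Y ⊕ Z)) : towerLt (u * w) (v * w) := by
  have hpair (c : FreeMonoid Y) (p q : Z × FreeMonoid Y) (hpq : towerPairLt p q) :
      towerPairLt (p.map id (· * c)) (q.map id (· * c)) := by
    rcases hpq with hlt | ⟨heq, hlt⟩
    · exact Or.inl (hY _ _ c hlt)
    · exact Or.inr ⟨congrArg (· * c) heq, hlt⟩
  simp only [towerLt, FreeMonoid.toList_mul, towerDecomp_append_snd_length] at h ⊢
  rcases h with hlen | ⟨hlen, hlex | ⟨hblocks, hhead⟩⟩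
  · exact Or.inl (by omega)
  · refine Or.inr ⟨by omega, Or.inl ?_⟩
    rw [towerDecomp_append_snd_reverse, towerDecomp_append_snd_reverse]
    exact (hlex.modifyHead (hpair _)).append_left _ _
  · refine Or.inr ⟨by omega, Or.inr ⟨?_, ?_⟩⟩
    · rw [← List.reverse_inj, towerDecomp_append_snd_reverse, towerDecomp_append_snd_reverse,
        hblocks]
    · rcases eq_or_ne (towerDecomp u.toList).2 [] with hu | hu
      · rw [towerDecomp_append_fst_of_snd_eq_nil _ _ hu,
          towerDecomp_append_fst_of_snd_eq_nil _ _ (hblocks ▸ hu)]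
        exact hY _ _ _ hhead
      · rwa [towerDecomp_append_fst_of_snd_ne_nil _ _ hu,
          towerDecomp_append_fst_of_snd_ne_nil _ _ (hblocks ▸ hu)]

lemma towerLt_mul_left (hY : ∀ a b c : FreeMonoid Y, a < b → c * a < c * b)
    (h : towerLt u v) (w : FreeMonoid (Y ⊕ Z)) : towerLt (w * u) (w * v) := by
  simp only [towerLt, FreeMonoid.toList_mul, towerDecomp_append_snd_length] at h ⊢
  rcases h with hlen | ⟨hlen, hlex | ⟨hblocks, hhead⟩⟩
  · exact Or.inl (by omega)
  · refine Or.inr ⟨by omega, Or.inl ?_⟩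
    rw [towerDecomp_append_snd_reverse, towerDecomp_append_snd_reverse]
    exact hlex.append_of_length_eq (by simpa using hlen)
  · refine Or.inr ⟨by omega, ?_⟩
    rcases eq_or_ne (towerDecomp w.toList).2 [] with hw | hw
    · refine Or.inr ⟨?_, ?_⟩
      · rw [← List.reverse_inj, towerDecomp_append_snd_reverse, towerDecomp_append_snd_reverse,
          hblocks, hw]
        rfl
      · rw [towerDecomp_append_fst_of_snd_eq_nil _ _ hw,
          towerDecomp_append_fst_of_snd_eq_nil _ _ hw]
        exact hY _ _ _ hhead
    · obtain ⟨p, T, hpT⟩ := List.exists_cons_of_ne_nil (List.reverse_ne_nil_iff.mpr hw)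
      refine Or.inl ?_
      rw [towerDecomp_append_snd_reverse, towerDecomp_append_snd_reverse, hpT, hblocks]
      exact List.Lex.append_left towerPairLt (.rel (Or.inl (hY _ _ p.2 hhead))) _

end Compatibility

/-- The inverse tower order on `X* = (Y ⊔ Z)*` relative to a monomial (linear) order on `Y*`
and a linear order on `Z` is a monomial order: it is a (strict) linear order, and
`u < v` implies `w₁ u w₂ < w₁ v w₂` for all words `w₁, w₂`. -/
theorem towerLt_isMonomialOrder [LinearOrder (FreeMonoid Y)] [LinearOrder Z]
    (hY : ∀ u v w₁ w₂ : FreeMonoid Y, u < v → w₁ * u * w₂ < w₁ * v * w₂) :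
    IsStrictTotalOrder (FreeMonoid (Y ⊕ Z)) towerLt ∧
      ∀ u v w₁ w₂ : FreeMonoid (Y ⊕ Z), towerLt u v →
        towerLt (w₁ * u * w₂) (w₁ * v * w₂) := by
  have hleft (a b c : FreeMonoid Y) (h : a < b) : c * a < c * b := by simpa using hY a b c 1 h
  have hright (a b c : FreeMonoid Y) (h : a < b) : a * c < b * c := by simpa using hY a b 1 c h
  exact ⟨towerLt_isStrictTotalOrder, fun u v w₁ w₂ h =>
    towerLt_mul_right hright (towerLt_mul_left hleft h w₁) w₂⟩
end
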